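/- arXiv:cs/9910009 — 7 statements merged into one kernel-verified Lean document; each statement's English description precedes it below -/
import Mathlib

section
/- Let S ⊂ ℝ³ be a finite set whose convex hull P has nonempty interior (a convex polytope). Then every simple open polygonal chain all of whose edges are contained in the topological boundary of P can be straightened: there exists a motion of the chain in ℝ³ ending in a configuration in which all vertices are collinear. -/
open scoped EuclideanGeometry RealInnerProductSpace

noncomputable section

abbrev E2 : Type := EuclideanSpace ℝ (Fin 2)
abbrev E3 : Type := EuclideanSpace ℝ (Fin 3)

/-- Simplicity of an open polygonal chain with vertices `v 0, …, v (n-1)`: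
nonadjacent edges are disjoint, adjacent edges meet exactly in their common vertex. -/
def IsSimpleOpenChain {E : Type*} [NormedAddCommGroup E] [NormedSpace ℝ E]
    (n : ℕ) (v : ℕ → E) : Prop :=
  (∀ i j : ℕ, i + 1 < n → j + 1 < n → i + 2 ≤ j →
    Disjoint (segment ℝ (v i) (v (i+1))) (segment ℝ (v j) (v (j+1)))) ∧
  ∀ i : ℕ, i + 2 < n →
    segment ℝ (v i) (v (i+1)) ∩ segment ℝ (v (i+1)) (v (i+2)) = {v (i+1)}

/-- A motion of an open chain: continuous on `[0,1]`, starting at `v`,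
preserving all edge lengths and simplicity. -/
def IsChainMotion {E : Type*} [NormedAddCommGroup E] [NormedSpace ℝ E]
    (n : ℕ) (v : ℕ → E) (f : ℝ → ℕ → E) : Prop :=
  (∀ i < n, ContinuousOn (fun t => f t i) (Set.Icc (0:ℝ) 1)) ∧
  (∀ i < n, f 0 i = v i) ∧
  (∀ t ∈ Set.Icc (0:ℝ) 1, ∀ i : ℕ, i + 1 < n →
    dist (f t (i+1)) (f t i) = dist (v (i+1)) (v i)) ∧
  (∀ t ∈ Set.Icc (0:ℝ) 1, IsSimpleOpenChain n (f t))

/-- The chain can be straightened: some motion ends with all vertices collinear. -/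
def CanStraighten {E : Type*} [NormedAddCommGroup E] [NormedSpace ℝ E]
    (n : ℕ) (v : ℕ → E) : Prop :=
  ∃ f : ℝ → ℕ → E, IsChainMotion n v f ∧ Collinear ℝ (f 1 '' {i | i < n})

/-!
Fix `o` in the interior of `P` and work backwards from the last vertex: at stage `m` the
vertices `v 0, …, v m` are in place and the rest of the chain is a straight ray pointing away
from `o`. To pass from stage `m + 1` to stage `m`, rotate the edge `[v m, v (m+1)]` about `v m`
until it points away from `o`, dragging the straight tail along. A supporting functional `ℓ`
of `P` that is constant on this edge does the bookkeeping: the fixed edges lie in `P`, where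
`ℓ ≤ ℓ (v m)`, while `ℓ` rises strictly along the rotated edge and along the tail, so the
chain stays simple throughout. At stage `0` the whole chain is straight.
-/

open Set unitInterval

section HalfSpace

variable {V : Type*} [AddCommGroup V] [Module ℝ V] (f : V →ₗ[ℝ] ℝ) {a b a' b' y : V} {c : ℝ}

theorem segment_subset_setOf_apply_le (ha : f a ≤ c) (hb : f b ≤ c) :
    segment ℝ a b ⊆ {y | f y ≤ c} :=
  (convex_halfSpace_le f.isLinear c).segment_subset ha hb

theorem disjoint_segment_of_apply_le_of_lt_apply (ha : f a ≤ c) (hb : f b ≤ c)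
    (ha' : c < f a') (hb' : c < f b') : Disjoint (segment ℝ a b) (segment ℝ a' b') :=
  Set.disjoint_left.2 fun y hy hy' =>
    (show f y ≤ c from segment_subset_setOf_apply_le f ha hb hy).not_gt
      ((convex_halfSpace_gt f.isLinear c).segment_subset ha' hb' hy')

theorem eq_left_of_mem_segment_of_apply_le (hy : y ∈ segment ℝ a b) (hya : f y ≤ f a)
    (hab : f a < f b) : y = a := by
  rw [segment_eq_image'] at hy
  obtain ⟨θ, ⟨hθ, -⟩, rfl⟩ := hy
  have hθ' : θ * (f b - f a) ≤ 0 := by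
    simpa only [map_add, map_smul, map_sub, smul_eq_mul, add_le_iff_nonpos_right] using hya
  have : θ = 0 := le_antisymm (nonpos_of_mul_nonpos_left hθ' (sub_pos.2 hab)) hθ
  simp [this]

end HalfSpace

theorem le_of_prefix_le_of_tail_le_succ {α : Type*} [Preorder α] {m n : ℕ} (a : ℕ → α)
    (hlow : ∀ k ≤ m, a k ≤ a m) (hstep : ∀ k, m ≤ k → k + 1 < n → a k ≤ a (k+1)) :
    ∀ k l, k ≤ l → m ≤ l → l < n → a k ≤ a l := by
  have htail : MonotoneOn a (Icc m (n - 1)) :=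
    monotoneOn_of_le_succ ordConnected_Icc fun k _ hk hk1 => by
      rw [Order.succ_eq_add_one, mem_Icc] at hk1
      exact hstep k hk.1 (by omega)
  intro k l hkl hml hln
  rcases le_total k m with hkm | hmk
  · exact (hlow k hkm).trans (htail ⟨le_rfl, by omega⟩ ⟨hml, by omega⟩ hml)
  · exact htail ⟨hmk, by omega⟩ ⟨hml, by omega⟩ hkl

def chainArcLength {X : Type*} [PseudoMetricSpace X] (v : ℕ → X) (j : ℕ) : ℝ :=
  ∑ i ∈ Finset.range j, dist (v (i+1)) (v i)

theorem chainArcLength_succ {X : Type*} [PseudoMetricSpace X] (v : ℕ → X) (j : ℕ) :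
    chainArcLength v (j+1) = chainArcLength v j + dist (v (j+1)) (v j) :=
  Finset.sum_range_succ _ _

variable {E : Type*} [NormedAddCommGroup E] [NormedSpace ℝ E]

namespace IsSimpleOpenChain

variable {n : ℕ} {v w : ℕ → E}

theorem congr (h : ∀ j < n, v j = w j) (hv : IsSimpleOpenChain n v) :
    IsSimpleOpenChain n w := by
  refine ⟨fun i j hi hj hij => ?_, fun i hi => ?_⟩
  · rw [← h i (by omega), ← h (i+1) hi, ← h j (by omega), ← h (j+1) hj]
    exact hv.1 i j hi hj hij
  · rw [← h i (by omega), ← h (i+1) (by omega), ← h (i+2) hi]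
    exact hv.2 i hi

theorem dist_pos (hv : IsSimpleOpenChain n v) {i : ℕ} (h1 : 1 ≤ i) (h2 : i + 2 < n) :
    0 < dist (v (i+1)) (v i) := by
  obtain ⟨i, rfl⟩ : ∃ k, i = k + 1 := ⟨i - 1, by omega⟩
  refine _root_.dist_pos.2 fun h => Set.disjoint_left.1 (hv.1 i (i+2) (by omega) (by omega) le_rfl)
    (right_mem_segment ℝ _ _) ?_
  rw [h]
  exact left_mem_segment ℝ _ _

/-- Level sets of `f` separate the new edges from the kept ones and from each other. -/
theorem of_rising_tail {m : ℕ} (hv : IsSimpleOpenChain n v) (hwv : ∀ k ≤ m, w k = v k)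
    (f : E →ₗ[ℝ] ℝ) (hlow : ∀ k ≤ m, f (w k) ≤ f (w m))
    (hrise : ∀ k, m ≤ k → k + 1 < n → f (w k) < f (w (k+1)) ∨ w (k+1) = w k)
    (hne : ∀ k, m ≤ k → k + 2 < n → w (k+1) ≠ w k) :
    IsSimpleOpenChain n w := by
  have hstep : ∀ k, m ≤ k → k + 1 < n → f (w k) ≤ f (w (k+1)) := fun k hk hkn =>
    (hrise k hk hkn).elim le_of_lt fun h => h ▸ le_rfl
  have hlt : ∀ k, m ≤ k → k + 2 < n → f (w k) < f (w (k+1)) := fun k hk hkn =>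
    (hrise k hk (by omega)).resolve_right (hne k hk hkn)
  have hmono := le_of_prefix_le_of_tail_le_succ (fun k => f (w k)) hlow hstep
  have hedge : ∀ i, i + 1 ≤ m → segment ℝ (w i) (w (i+1)) = segment ℝ (v i) (v (i+1)) :=
    fun i hi => by rw [hwv i (by omega), hwv (i+1) hi]
  have hbelow : ∀ i l, i + 1 ≤ l → m ≤ l → l < n →
      segment ℝ (w i) (w (i+1)) ⊆ {y | f y ≤ f (w l)} := fun i l h1 h2 h3 =>
    segment_subset_setOf_apply_le f (hmono _ _ (by omega) h2 h3) (hmono _ _ h1 h2 h3)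
  have hvertex : ∀ k y, m ≤ k → k + 1 < n → y ∈ segment ℝ (w k) (w (k+1)) →
      f y ≤ f (w k) → y = w k := by
    intro k y hk hkn hy hyk
    rcases hrise k hk hkn with h | h
    · exact eq_left_of_mem_segment_of_apply_le f hy hyk h
    · rwa [h, segment_same, mem_singleton_iff] at hy
  refine ⟨fun i j hi hj hij => ?_, fun i hi => ?_⟩
  · rcases lt_trichotomy j m with hjm | rfl | hmj
    · rw [hedge i (by omega), hedge j hjm]
      exact hv.1 i j hi hj hij
    · refine Set.disjoint_left.2 fun y hyi hyj => ?_
      have hy : y = w j := hvertex j y le_rfl hj hyj (hbelow i j (by omega) le_rfl (by omega) hyi)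
      rw [hedge i (by omega), hy, hwv j le_rfl] at hyi
      exact Set.disjoint_left.1 (hv.1 i j hi hj hij) hyi (left_mem_segment ℝ _ _)
    · obtain ⟨l, rfl⟩ : ∃ l, j = l + 1 := ⟨j - 1, by omega⟩
      have hl := hlt l (by omega) hj
      exact disjoint_segment_of_apply_le_of_lt_apply f (hmono i l (by omega) (by omega) (by omega))
        (hmono (i+1) l (by omega) (by omega) (by omega)) hl
        (hl.trans_le (hstep (l+1) (by omega) hj))
  · rcases le_or_gt (i + 2) m with him | hmi
    · rw [hedge i (by omega), hedge (i+1) him, hwv (i+1) (by omega)]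
      exact hv.2 i hi
    · refine subset_antisymm (fun y ⟨hyi, hyi1⟩ => hvertex (i+1) y (by omega) hi hyi1
        (hbelow i (i+1) le_rfl (by omega) (by omega) hyi)) ?_
      rw [singleton_subset_iff]
      exact ⟨right_mem_segment ℝ _ _, left_mem_segment ℝ _ _⟩

end IsSimpleOpenChain

def layOutFrom (v : ℕ → E) (k : ℕ) (x u : E) (j : ℕ) : E :=
  if j < k then v j else x + (chainArcLength v j - chainArcLength v k) • u

section LayOutFrom

variable {v : ℕ → E} {k j : ℕ} {x u : E}

theorem layOutFrom_of_lt (h : j < k) : layOutFrom v k x u j = v j := if_pos h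

theorem layOutFrom_of_le (h : k ≤ j) :
    layOutFrom v k x u j = x + (chainArcLength v j - chainArcLength v k) • u :=
  if_neg h.not_gt

theorem layOutFrom_self : layOutFrom v k x u k = x := by
  rw [layOutFrom_of_le le_rfl, sub_self, zero_smul, add_zero]

theorem layOutFrom_self_of_le (h : j ≤ k) : layOutFrom v k (v k) u j = v j := by
  rcases h.lt_or_eq with h | rfl
  · exact layOutFrom_of_lt h
  · exact layOutFrom_self

theorem layOutFrom_succ (h : k ≤ j) :
    layOutFrom v k x u (j+1) = layOutFrom v k x u j + dist (v (j+1)) (v j) • u := by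
  rw [layOutFrom_of_le h, layOutFrom_of_le (by omega), chainArcLength_succ]
  module

theorem layOutFrom_succ_eq {m : ℕ} :
    layOutFrom v (m+1) (v m + dist (v (m+1)) (v m) • u) u = layOutFrom v m (v m) u := by
  funext j
  rcases lt_or_ge j (m+1) with hj | hj
  · rw [layOutFrom_of_lt hj, layOutFrom_self_of_le (by omega)]
  · rw [layOutFrom_of_le hj, layOutFrom_of_le (by omega), chainArcLength_succ]
    module

theorem dist_layOutFrom_succ {m : ℕ} (hu : ‖u‖ = 1) (hx : dist x (v m) = dist (v (m+1)) (v m))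
    (j : ℕ) :
    dist (layOutFrom v (m+1) x u (j+1)) (layOutFrom v (m+1) x u j) = dist (v (j+1)) (v j) := by
  rcases lt_trichotomy j m with h | rfl | h
  · rw [layOutFrom_of_lt (by omega), layOutFrom_of_lt (by omega)]
  · rw [layOutFrom_self, layOutFrom_of_lt (by omega), hx]
  · rw [layOutFrom_succ (by omega), dist_self_add_left, norm_smul, hu, mul_one,
      Real.norm_of_nonneg dist_nonneg]

theorem collinear_range_layOutFrom_zero : Collinear ℝ (range (layOutFrom v 0 x u)) := by
  rw [collinear_iff_exists_forall_eq_smul_vadd]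
  refine ⟨x, u, ?_⟩
  rintro _ ⟨j, rfl⟩
  exact ⟨_, (layOutFrom_of_le (Nat.zero_le j)).trans (add_comm _ _)⟩

theorem isSimpleOpenChain_layOutFrom {n m : ℕ} (hv : IsSimpleOpenChain n v) (f : E →ₗ[ℝ] ℝ)
    (hlow : ∀ k ≤ m, f (v k) ≤ f (v m)) (hx : f (v m) < f x) (hu : 0 < f u) :
    IsSimpleOpenChain n (layOutFrom v (m+1) x u) := by
  set w := layOutFrom v (m+1) x u with hw
  have hwv : ∀ k ≤ m, w k = v k := fun k hk => layOutFrom_of_lt (by omega)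
  have hrise_m : f (w m) < f (w (m+1)) := by rwa [hwv m le_rfl, hw, layOutFrom_self]
  have hrise_tail : ∀ k, m + 1 ≤ k → 0 < dist (v (k+1)) (v k) → f (w k) < f (w (k+1)) := by
    intro k hk hd
    rw [hw, layOutFrom_succ hk, map_add, map_smul, smul_eq_mul]
    linarith [mul_pos hd hu]
  have hlt : ∀ k, m ≤ k → k + 2 < n → f (w k) < f (w (k+1)) := fun k hk hkn => by
    rcases hk.eq_or_lt with rfl | hk
    · exact hrise_m
    · exact hrise_tail k hk (hv.dist_pos (by omega) hkn)
  refine hv.of_rising_tail hwv f (fun k hk => by rw [hwv k hk, hwv m le_rfl]; exact hlow k hk)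
    (fun k hk hkn => ?_) (fun k hk hkn h => (hlt k hk hkn).ne' (congrArg f h))
  rcases hk.eq_or_lt with rfl | hk
  · exact Or.inl hrise_m
  rcases (dist_nonneg (x := v (k+1)) (y := v k)).eq_or_lt with hd | hd
  · right
    rw [hw, layOutFrom_succ hk, ← hd, zero_smul, add_zero]
  · exact Or.inl (hrise_tail k hk hd)

end LayOutFrom

def unitDirFrom (o x : E) : E := ‖x - o‖⁻¹ • (x - o)

section UnitDirFrom

variable {o x : E}

theorem norm_unitDirFrom (h : x ≠ o) : ‖unitDirFrom o x‖ = 1 :=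
  norm_smul_inv_norm (𝕜 := ℝ) (sub_ne_zero.2 h)

theorem apply_unitDirFrom_pos (f : E →ₗ[ℝ] ℝ) (h : f o < f x) : 0 < f (unitDirFrom o x) := by
  have hxo : x - o ≠ 0 := sub_ne_zero.2 fun hxo => h.ne' (congrArg f hxo)
  rw [unitDirFrom, map_smul, map_sub, smul_eq_mul]
  exact mul_pos (inv_pos.2 (norm_pos_iff.2 hxo)) (sub_pos.2 h)

theorem unitDirFrom_add_smul_self (h : x ≠ o) {r : ℝ} (hr : 0 ≤ r) :
    unitDirFrom o (x + r • unitDirFrom o x) = unitDirFrom o x := by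
  have hd : 0 < ‖x - o‖ := norm_pos_iff.2 (sub_ne_zero.2 h)
  have hc : x + r • unitDirFrom o x - o = (1 + r / ‖x - o‖) • (x - o) := by
    rw [unitDirFrom]
    module
  rw [unitDirFrom, hc, norm_smul, Real.norm_of_nonneg (by positivity), smul_smul, unitDirFrom]
  congr 1
  field_simp

end UnitDirFrom

def radialStraightening (o : E) (v : ℕ → E) (m : ℕ) : ℕ → E :=
  layOutFrom v m (v m) (unitDirFrom o (v m))

theorem layOutFrom_succ_eq_radialStraightening {o : E} {v : ℕ → E} {m : ℕ} (h : v m ≠ o) :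
    layOutFrom v (m+1) (v m + dist (v (m+1)) (v m) • unitDirFrom o (v m))
      (unitDirFrom o (v m + dist (v (m+1)) (v m) • unitDirFrom o (v m))) =
      radialStraightening o v m := by
  rw [unitDirFrom_add_smul_self h dist_nonneg]
  exact layOutFrom_succ_eq

def radialProj (c : E) (r : ℝ) (y : E) : E := c + (r / ‖y - c‖) • (y - c)

section RadialProj

variable {c y : E} {r : ℝ}

theorem dist_radialProj (hy : y ≠ c) (hr : 0 ≤ r) : dist (radialProj c r y) c = r := by
  have hd : ‖y - c‖ ≠ 0 := norm_ne_zero_iff.2 (sub_ne_zero.2 hy)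
  rw [radialProj, dist_self_add_left, norm_smul, Real.norm_of_nonneg (by positivity),
    div_mul_cancel₀ _ hd]

theorem radialProj_of_dist_eq (h : dist y c = r) : radialProj c r y = y := by
  rcases eq_or_ne y c with rfl | hy
  · simp [radialProj]
  · rw [radialProj, ← h, dist_eq_norm, div_self (norm_ne_zero_iff.2 (sub_ne_zero.2 hy)),
      one_smul, add_sub_cancel]

theorem apply_radialProj_sub (f : E →ₗ[ℝ] ℝ) :
    f (radialProj c r y) - f c = r / ‖y - c‖ * (f y - f c) := by
  rw [radialProj, map_add, map_smul, map_sub, smul_eq_mul, add_sub_cancel_left]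

theorem ContinuousOn.radialProj {s : Set ℝ} {g : ℝ → E} (hg : ContinuousOn g s)
    (hne : ∀ t ∈ s, g t ≠ c) : ContinuousOn (fun t => radialProj c r (g t)) s := by
  unfold _root_.radialProj
  have : ∀ t ∈ s, ‖g t - c‖ ≠ 0 := fun t ht => norm_ne_zero_iff.2 (sub_ne_zero.2 (hne t ht))
  fun_prop (disch := assumption)

end RadialProj

theorem exists_supporting_of_segment_subset_frontier {P : Set E} (hP : Convex ℝ P)
    (hPc : IsClosed P) {o a b : E} (ho : o ∈ interior P) (hab : segment ℝ a b ⊆ frontier P) :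
    ∃ ℓ : StrongDual ℝ E, (∀ y ∈ P, ℓ y ≤ ℓ a) ∧ ℓ b = ℓ a ∧ ℓ o < ℓ a := by
  have hz : midpoint ℝ a b ∉ interior P := (hab (midpoint_mem_segment a b)).2
  obtain ⟨ℓ, hℓ⟩ := geometric_hahn_banach_open_point hP.interior isOpen_interior hz
  have hle : ∀ y ∈ P, ℓ y ≤ ℓ (midpoint ℝ a b) := fun y hy =>
    closure_minimal (fun y hy => (hℓ y hy).le) (isClosed_Iic.preimage ℓ.continuous)
      (by rw [hP.closure_interior_eq_closure_of_nonempty_interior ⟨o, ho⟩]; exact subset_closure hy)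
  have hmid : ℓ (midpoint ℝ a b) = (ℓ a + ℓ b) / 2 := by
    rw [midpoint_eq_smul_add, map_smul, map_add, smul_eq_mul, invOf_eq_inv]
    ring
  have ha := hle a (hPc.frontier_subset (hab (left_mem_segment ℝ a b)))
  have hb := hle b (hPc.frontier_subset (hab (right_mem_segment ℝ a b)))
  have hza : ℓ (midpoint ℝ a b) = ℓ a := by linarith
  exact ⟨ℓ, fun y hy => hza ▸ hle y hy, by linarith, hza ▸ hℓ o ho⟩

def chainConfigSpace (n : ℕ) (v : ℕ → E) : Set (ℕ → E) :=
  {w | IsSimpleOpenChain n w ∧ ∀ i, i + 1 < n → dist (w (i+1)) (w i) = dist (v (i+1)) (v i)}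

theorem mem_chainConfigSpace_of_eqOn {n : ℕ} {v w : ℕ → E} (h : ∀ j < n, w j = v j)
    (hv : IsSimpleOpenChain n v) : w ∈ chainConfigSpace n v :=
  ⟨hv.congr fun j hj => (h j hj).symm, fun i hi => by rw [h i (by omega), h (i+1) hi]⟩

theorem canStraighten_of_joinedIn {n : ℕ} {v w w' : ℕ → E} (hw : ∀ j < n, w j = v j)
    (h : JoinedIn (chainConfigSpace n v) w w') (hcol : Collinear ℝ (w' '' {i | i < n})) :
    CanStraighten n v := by
  obtain ⟨γ, hγ⟩ := h
  refine ⟨γ.extend, ⟨fun i _ => ((continuous_apply i).comp γ.continuous_extend).continuousOn,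
    fun i hi => by simp [hw i hi], fun t ht i hi => ?_, fun t ht => ?_⟩, by simpa using hcol⟩
  · rw [γ.extend_apply ht]
    exact (hγ _).2 i hi
  · rw [γ.extend_apply ht]
    exact (hγ _).1

theorem continuousOn_layOutFrom_unitDirFrom {v : ℕ → E} {k : ℕ} {o : E} {s : Set ℝ}
    {x : ℝ → E} (hx : ContinuousOn x s) (ho : ∀ t ∈ s, x t ≠ o) :
    ContinuousOn (fun t => layOutFrom v k (x t) (unitDirFrom o (x t))) s := by
  refine continuousOn_pi.2 fun j => ?_
  rcases lt_or_ge j k with hj | hj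
  · simp only [layOutFrom_of_lt hj]
    exact continuousOn_const
  · simp only [layOutFrom_of_le hj, unitDirFrom]
    have : ∀ t ∈ s, ‖x t - o‖ ≠ 0 := fun t ht => norm_ne_zero_iff.2 (sub_ne_zero.2 (ho t ht))
    fun_prop (disch := assumption)

theorem exists_rising_path_on_sphere (f : E →ₗ[ℝ] ℝ) {c p q : E} {r : ℝ} (hr : 0 < r)
    (hp : dist p c = r) (hq : dist q c = r) (hfp : f p = f c) (hfq : f c < f q) :
    ∃ x : ℝ → E, ContinuousOn x I ∧ x 0 = p ∧ x 1 = q ∧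
      ∀ t ∈ I, dist (x t) c = r ∧ (0 < t → f c < f (x t)) := by
  have hfg : ∀ t : ℝ, f (p + t • (q - p)) - f c = t * (f q - f c) := fun t => by
    rw [map_add, map_smul, map_sub, smul_eq_mul, hfp]
    ring
  have hg : ∀ t ∈ I, p + t • (q - p) ≠ c := by
    intro t ht h
    rcases ht.1.eq_or_lt with rfl | ht0
    · rw [zero_smul, add_zero] at h
      rw [h, dist_self] at hp
      exact hr.ne hp
    · have := hfg t
      rw [h, sub_self] at this
      exact (mul_pos ht0 (sub_pos.2 hfq)).ne this
  refine ⟨fun t => radialProj c r (p + t • (q - p)), ContinuousOn.radialProj (by fun_prop) hg,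
    by simpa using radialProj_of_dist_eq hp, by simpa using radialProj_of_dist_eq hq,
    fun t ht => ⟨dist_radialProj (hg t ht) hr.le, fun ht0 => ?_⟩⟩
  have hpos : 0 < r / ‖p + t • (q - p) - c‖ * (t * (f q - f c)) :=
    mul_pos (div_pos hr (norm_pos_iff.2 (sub_ne_zero.2 (hg t ht)))) (mul_pos ht0 (sub_pos.2 hfq))
  have := apply_radialProj_sub f (c := c) (r := r) (y := p + t • (q - p))
  rw [hfg] at this
  linarith

theorem joinedIn_radialStraightening_succ {P : Set E} (hP : Convex ℝ P) (hPc : IsClosed P)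
    {o : E} (ho : o ∈ interior P) {n m : ℕ} {v : ℕ → E} (hv : IsSimpleOpenChain n v)
    (hbd : ∀ i, i + 1 < n → segment ℝ (v i) (v (i+1)) ⊆ frontier P) (hm : m + 1 < n)
    (hstart : radialStraightening o v (m+1) ∈ chainConfigSpace n v) :
    JoinedIn (chainConfigSpace n v) (radialStraightening o v (m+1))
      (radialStraightening o v m) := by
  obtain ⟨ℓ, hℓP, hℓb, hℓo⟩ := exists_supporting_of_segment_subset_frontier hP hPc ho (hbd m hm)
  have hlow : ∀ k ≤ m, ℓ (v k) ≤ ℓ (v m) := fun k hk =>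
    hℓP _ (hPc.frontier_subset (hbd k (by omega) (left_mem_segment ℝ _ _)))
  have hvo : v m ≠ o := fun h => hℓo.ne' (congrArg ℓ h)
  have hend := layOutFrom_succ_eq_radialStraightening (m := m) hvo
  rcases (dist_nonneg (x := v (m+1)) (y := v m)).eq_or_lt with hr | hr
  · rw [← hend, ← hr, zero_smul, add_zero, ← dist_eq_zero.1 hr.symm]
    exact JoinedIn.refl hstart
  obtain ⟨x, hxc, hx0, hx1, hx⟩ := exists_rising_path_on_sphere (ℓ : E →ₗ[ℝ] ℝ)
    (c := v m) (p := v (m+1)) (q := v m + dist (v (m+1)) (v m) • unitDirFrom o (v m)) hr rfl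
    (by rw [dist_self_add_left, norm_smul, norm_unitDirFrom hvo, mul_one,
      Real.norm_of_nonneg dist_nonneg]) hℓb
    (by
      rw [map_add, map_smul, smul_eq_mul]
      linarith [mul_pos hr (apply_unitDirFrom_pos (ℓ : E →ₗ[ℝ] ℝ) hℓo)])
  have hxo : ∀ t ∈ I, x t ≠ o := by
    intro t ht h
    rcases ht.1.eq_or_lt with rfl | ht0
    · rw [hx0] at h
      rw [h] at hℓb
      exact hℓo.ne hℓb
    · have := (hx t ht).2 ht0
      rw [h] at this
      exact hℓo.not_gt this
  refine JoinedIn.ofLine (continuousOn_layOutFrom_unitDirFrom hxc hxo) (by rw [hx0]; rfl)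
    (by rw [hx1]; exact hend) ?_
  rintro _ ⟨t, ht, rfl⟩
  rcases ht.1.eq_or_lt with rfl | ht0
  · show layOutFrom v (m+1) (x 0) (unitDirFrom o (x 0)) ∈ _
    rw [hx0]
    exact hstart
  · have hℓx := (hx t ht).2 ht0
    exact ⟨isSimpleOpenChain_layOutFrom hv ℓ hlow hℓx
      (apply_unitDirFrom_pos (ℓ : E →ₗ[ℝ] ℝ) (hℓo.trans hℓx)),
      fun i _ => dist_layOutFrom_succ (norm_unitDirFrom (hxo t ht)) (hx t ht).1 i⟩

theorem canStraighten_of_segment_subset_frontier {P : Set E} (hP : Convex ℝ P)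
    (hPc : IsClosed P) (hint : (interior P).Nonempty) {n : ℕ} {v : ℕ → E}
    (hv : IsSimpleOpenChain n v)
    (hbd : ∀ i, i + 1 < n → segment ℝ (v i) (v (i+1)) ⊆ frontier P) :
    CanStraighten n v := by
  obtain ⟨o, ho⟩ := hint
  have hbase : ∀ j < n, radialStraightening o v (n-1) j = v j := fun j hj =>
    layOutFrom_self_of_le (by omega)
  have hjoin : JoinedIn (chainConfigSpace n v) (radialStraightening o v (n-1))
      (radialStraightening o v 0) :=
    Nat.decreasingInduction (motive := fun k _ => JoinedIn (chainConfigSpace n v)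
        (radialStraightening o v (n-1)) (radialStraightening o v k))
      (fun k hk ih => ih.trans
        (joinedIn_radialStraightening_succ hP hPc ho hv hbd (by omega) ih.mem.2))
      (JoinedIn.refl (mem_chainConfigSpace_of_eqOn hbase hv)) (Nat.zero_le _)
  exact canStraighten_of_joinedIn hbase hjoin
    (collinear_range_layOutFrom_zero.subset (image_subset_range _ _))

/-- Every simple open polygonal chain all of whose edges lie in
the boundary of a convex polytope (the convex hull of a finite set with nonempty
interior) can be straightened. -/
theorem straighten_of_chain_on_polytope (S : Set E3) (hfin : S.Finite)
    (hint : (interior (convexHull ℝ S)).Nonempty)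
    (n : ℕ) (v : ℕ → E3)
    (hsimple : IsSimpleOpenChain n v)
    (hbd : ∀ i : ℕ, i + 1 < n →
      segment ℝ (v i) (v (i+1)) ⊆ frontier (convexHull ℝ S)) :
    CanStraighten n v :=
  canStraighten_of_segment_subset_frontier (convex_convexHull ℝ S) (hfin.isClosed_convexHull ℝ)
    hint hsimple hbd
end
end

section
/- Every simple open polygonal chain contained in a plane of ℝ³ (say the plane z = 0) can be straightened by a motion in ℝ³: there exists a motion of the chain in ℝ³ ending in a configuration in which all vertices are collinear. -/
open scoped EuclideanGeometry RealInnerProductSpace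

noncomputable section

/-! ### Auxiliary definitions for the lifting motion -/

/-- Length of the `k`-th edge. -/
def chainL (v : ℕ → E3) (k : ℕ) : ℝ := dist (v (k+1)) (v k)

/-- Cumulative length of the first `i` edges. -/
def chainZ (v : ℕ → E3) (i : ℕ) : ℝ := ∑ k ∈ Finset.range i, chainL v k

/-- Vertical scaling factor, `√(t(2-t))`; satisfies `(1-t)² + μ(t)² = 1` on `[0,1]`. -/
def chainMu (t : ℝ) : ℝ := Real.sqrt (t * (2 - t))

/-- The lifting motion: shrink planar coordinates by `1 - t`, lift vertex `i`
to height `μ(t) · Z i`. -/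
def chainF (v : ℕ → E3) (t : ℝ) (i : ℕ) : E3 :=
  (1 - t) • v i + (chainMu t * chainZ v i) • (EuclideanSpace.single 2 1 : E3)

lemma chainL_nonneg (v : ℕ → E3) (k : ℕ) : 0 ≤ chainL v k := dist_nonneg

lemma chainZ_succ (v : ℕ → E3) (k : ℕ) : chainZ v (k+1) = chainZ v k + chainL v k :=
  Finset.sum_range_succ _ _

lemma chainZ_mono (v : ℕ → E3) : Monotone (chainZ v) := fun _ _ h =>
  Finset.sum_le_sum_of_subset_of_nonneg (Finset.range_subset_range.2 h)
    (fun k _ _ => chainL_nonneg v k)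

lemma chainMu_zero : chainMu 0 = 0 := by simp [chainMu]

lemma chainMu_pos {t : ℝ} (h0 : 0 < t) (h1 : t ≤ 1) : 0 < chainMu t :=
  Real.sqrt_pos.2 (by nlinarith)

lemma chainMu_sq {t : ℝ} (h0 : 0 ≤ t) (h1 : t ≤ 1) : chainMu t ^ 2 = t * (2 - t) :=
  Real.sq_sqrt (by nlinarith)

lemma chainF_zero (v : ℕ → E3) (i : ℕ) : chainF v 0 i = v i := by
  simp [chainF, chainMu_zero]

lemma chainF_apply0 (v : ℕ → E3) (t : ℝ) (i : ℕ) :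
    chainF v t i 0 = (1 - t) * v i 0 := by
  simp [chainF, EuclideanSpace.single_apply, PiLp.add_apply, PiLp.smul_apply]

lemma chainF_apply1 (v : ℕ → E3) (t : ℝ) (i : ℕ) :
    chainF v t i 1 = (1 - t) * v i 1 := by
  simp [chainF, EuclideanSpace.single_apply, PiLp.add_apply, PiLp.smul_apply]

lemma chainF_apply2' (v : ℕ → E3) (t : ℝ) (i : ℕ) :
    chainF v t i 2 = (1 - t) * v i 2 + chainMu t * chainZ v i := by
  simp [chainF, EuclideanSpace.single_apply, PiLp.add_apply, PiLp.smul_apply]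

lemma chainF_apply2 {v : ℕ → E3} {i : ℕ} (hv : v i 2 = 0) (t : ℝ) :
    chainF v t i 2 = chainMu t * chainZ v i := by
  rw [chainF_apply2', hv]; ring

/-- A coordinate of a point of a segment lies in the corresponding coordinate segment. -/
lemma seg_coord_mem {a b p : E3} (h : p ∈ segment ℝ a b) (j : Fin 3) :
    p j ∈ segment ℝ (a j) (b j) := by
  obtain ⟨s, u, hs, hu, hsu, rfl⟩ := h
  exact ⟨s, u, hs, hu, hsu, by simp⟩

/-- If the last coordinate strictly increases along a segment, the only point of the
segment with maximal last coordinate is the right endpoint. -/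
lemma seg_eq_right {a b p : E3} (h : p ∈ segment ℝ a b) (hab : a 2 < b 2)
    (hp : p 2 = b 2) : p = b := by
  obtain ⟨s, u, hs, hu, hsu, rfl⟩ := h
  have hcoord : s * a 2 + u * b 2 = b 2 := by
    have : (s • a + u • b) 2 = s * a 2 + u * b 2 := by simp
    rw [this] at hp; exact hp
  have hu' : u = 1 - s := by linarith
  rw [hu'] at hcoord
  have hs0 : s * (b 2 - a 2) = 0 := by linear_combination -hcoord
  have : s = 0 := by
    rcases mul_eq_zero.mp hs0 with h' | h'
    · exact h'
    · linarith
  subst this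
  have : u = 1 := by linarith
  subst this
  simp

/-- Simplicity only depends on the first `n` vertices. -/
lemma isSimpleOpenChain_congr {n : ℕ} {v w : ℕ → E3}
    (hw : ∀ i < n, w i = v i) (h : IsSimpleOpenChain n v) : IsSimpleOpenChain n w := by
  obtain ⟨h1, h2⟩ := h
  constructor
  · intro i j hi hj hij
    rw [hw i (by omega), hw (i+1) (by omega), hw j (by omega), hw (j+1) (by omega)]
    exact h1 i j hi hj hij
  · intro i hi
    rw [hw i (by omega), hw (i+1) (by omega), hw (i+2) (by omega)]
    exact h2 i hi

/-- Interior edges of a simple chain have positive length. -/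
lemma chainL_interior_pos {n : ℕ} {v : ℕ → E3} (hsimple : IsSimpleOpenChain n v)
    (k : ℕ) (hk : k + 3 < n) : 0 < chainL v (k+1) := by
  rw [chainL, dist_pos]
  intro hEq
  have e1 : k + 1 + 1 = k + 2 := by omega
  rw [e1] at hEq
  have hd := hsimple.1 k (k+2) (by omega) (by omega) (by omega)
  have hmem1 : v (k+1) ∈ segment ℝ (v k) (v (k+1)) := right_mem_segment ℝ _ _
  have hmem2 : v (k+1) ∈ segment ℝ (v (k+2)) (v (k+2+1)) := by
    rw [← hEq]; exact left_mem_segment ℝ _ _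
  exact Set.disjoint_left.mp hd hmem1 hmem2

/-- Every simple open polygonal chain lying in the plane
`z = 0` of `ℝ³` can be straightened by a motion in `ℝ³`. -/
theorem straighten_of_planar_open_chain (n : ℕ) (v : ℕ → E3)
    (hplanar : ∀ i < n, v i 2 = 0)
    (hsimple : IsSimpleOpenChain n v) :
    CanStraighten n v := by
  refine ⟨chainF v, ⟨?_, ?_, ?_, ?_⟩, ?_⟩
  · -- continuity
    intro i _
    apply Continuous.continuousOn
    have hμ : Continuous chainMu := Real.continuous_sqrt.comp (by continuity)
    exact ((continuous_const.sub continuous_id).smul continuous_const).add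
      ((hμ.mul continuous_const).smul continuous_const)
  · -- initial position
    intro i _
    exact chainF_zero v i
  · -- edge lengths preserved
    intro t ht i hi
    have h2a : v i 2 = 0 := hplanar i (by omega)
    have h2b : v (i+1) 2 = 0 := hplanar (i+1) hi
    have hμs : chainMu t ^ 2 = t * (2 - t) := chainMu_sq ht.1 ht.2
    have hS : dist (v (i+1)) (v i) ^ 2
        = (v (i+1) 0 - v i 0)^2 + (v (i+1) 1 - v i 1)^2 := by
      rw [EuclideanSpace.dist_eq, Fin.sum_univ_three, Real.sq_sqrt (by positivity)]
      simp [Real.dist_eq, sq_abs, h2a, h2b]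
    have key : dist (chainF v t (i+1)) (chainF v t i) ^ 2
        = dist (v (i+1)) (v i) ^ 2 := by
      rw [EuclideanSpace.dist_eq, Real.sq_sqrt (by positivity), Fin.sum_univ_three,
        chainF_apply0, chainF_apply0, chainF_apply1, chainF_apply1,
        chainF_apply2 h2b, chainF_apply2 h2a, chainZ_succ,
        show chainL v i = dist (v (i+1)) (v i) from rfl]
      simp only [Real.dist_eq, sq_abs]
      linear_combination (dist (v (i+1)) (v i))^2 * hμs - (1-t)^2 * hS
    have := congrArg Real.sqrt key
    rwa [Real.sqrt_sq dist_nonneg, Real.sqrt_sq dist_nonneg] at this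
  · -- simplicity throughout
    intro t ht
    rcases eq_or_lt_of_le ht.1 with h0 | h0
    · exact isSimpleOpenChain_congr (fun i _ => by rw [← h0]; exact chainF_zero v i) hsimple
    · -- t > 0 : separation by z-coordinates
      have ht1 := ht.2
      have hμpos : 0 < chainMu t := chainMu_pos h0 ht1
      have hzr : ∀ i, i + 1 < n → ∀ p ∈ segment ℝ (chainF v t i) (chainF v t (i+1)),
          chainMu t * chainZ v i ≤ p 2 ∧ p 2 ≤ chainMu t * chainZ v (i+1) := by
        intro i hi p hp
        have h := seg_coord_mem hp 2
        rw [chainF_apply2 (hplanar i (by omega)), chainF_apply2 (hplanar (i+1) hi),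
          segment_eq_Icc (mul_le_mul_of_nonneg_left (chainZ_mono v (Nat.le_succ i))
            hμpos.le)] at h
        exact ⟨h.1, h.2⟩
      constructor
      · -- nonadjacent edges disjoint
        intro i j hi hj hij
        have hgap : chainZ v (i+1) < chainZ v j := by
          have hL1 : 0 < chainL v (i+1) := chainL_interior_pos hsimple i (by omega)
          calc chainZ v (i+1) < chainZ v (i+1) + chainL v (i+1) := by linarith
            _ = chainZ v (i+2) := (chainZ_succ v (i+1)).symm
            _ ≤ chainZ v j := chainZ_mono v (by omega)
        rw [Set.disjoint_left]
        intro p hp1 hp2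
        have a1 := (hzr i hi p hp1).2
        have a2 := (hzr j hj p hp2).1
        have := mul_lt_mul_of_pos_left hgap hμpos
        linarith
      · -- adjacent edges meet exactly at common vertex
        intro i hi
        apply Set.Subset.antisymm
        · rintro p ⟨hp1, hp2⟩
          have a1 := (hzr i (by omega) p hp1).2
          have a2 := (hzr (i+1) hi p hp2).1
          have hpz : p 2 = chainMu t * chainZ v (i+1) := le_antisymm a1 a2
          rw [Set.mem_singleton_iff]
          by_cases hL0 : chainL v i = 0
          · have hvv : v (i+1) = v i := by
              have : dist (v (i+1)) (v i) = 0 := hL0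
              exact dist_eq_zero.mp this
            have hFF : chainF v t i = chainF v t (i+1) := by
              rw [chainF, chainF, hvv, chainZ_succ, hL0, add_zero]
            rw [← hFF, segment_same] at hp1
            rw [← hFF]
            exact hp1
          · have hLpos : 0 < chainL v i := lt_of_le_of_ne (chainL_nonneg v i) (Ne.symm hL0)
            have hlt : chainF v t i 2 < chainF v t (i+1) 2 := by
              rw [chainF_apply2 (hplanar i (by omega)),
                chainF_apply2 (hplanar (i+1) (by omega)), chainZ_succ]
              have : chainZ v i < chainZ v i + chainL v i := by linarith
              exact mul_lt_mul_of_pos_left this hμpos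
            exact seg_eq_right hp1 hlt
              (by rw [hpz, chainF_apply2 (hplanar (i+1) (by omega))])
        · intro p hp
          rw [Set.mem_singleton_iff] at hp
          subst hp
          exact ⟨right_mem_segment ℝ _ _, left_mem_segment ℝ _ _⟩
  · -- final configuration is collinear (on the z-axis)
    rw [collinear_iff_exists_forall_eq_smul_vadd]
    refine ⟨0, EuclideanSpace.single 2 1, ?_⟩
    rintro p ⟨i, _, rfl⟩
    refine ⟨chainMu 1 * chainZ v i, ?_⟩
    simp [chainF]
end
end

section
/- Let A, B, C be points in the Euclidean plane with ‖A − B‖ ≥ ℓ, ‖C − B‖ ≥ ℓ, and β ≤ ∠(A,B,C) ≤ π − β for some ℓ > 0 and β > 0, and let 0 < δ ≤ (ℓ/2)·sin(β/2). Then for all points A', B', C' with ‖A − A'‖ < δ, ‖B − B'‖ < δ, and ‖C − C'‖ < δ, the angle ∠(A',B',C') is strictly less than π; in particular B' does not lie strictly between A' and C'. -/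
open scoped EuclideanGeometry RealInnerProductSpace

noncomputable section

private lemma alg_lemma (ℓ a c s t x sb n : ℝ)
    (hl : 0 < ℓ) (hAB : ℓ ≤ a) (hCB : ℓ ≤ c)
    (hs : 0 ≤ s) (ht : 0 ≤ t) (hst : s + t = 1)
    (hsb0 : 0 ≤ sb) (hsb1 : 2 * sb ^ 2 ≤ 1)
    (hx : -(1 - 2 * sb ^ 2) ≤ x)
    (hn : 0 ≤ n)
    (hexp : n ^ 2 = s ^ 2 * a ^ 2 + t ^ 2 * c ^ 2 + 2 * s * t * (x * (a * c))) :
    ℓ * sb ≤ n := by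
  have ha0 : (0:ℝ) ≤ a := le_trans hl.le hAB
  have hc0 : (0:ℝ) ≤ c := le_trans hl.le hCB
  have haa : ℓ ^ 2 ≤ a ^ 2 := by nlinarith
  have hcc : ℓ ^ 2 ≤ c ^ 2 := by nlinarith
  have step1 : s ^ 2 * a ^ 2 + t ^ 2 * c ^ 2
      - 2 * s * t * (1 - 2 * sb ^ 2) * (a * c) ≤ n ^ 2 := by
    nlinarith [mul_nonneg (mul_nonneg hs ht) (mul_nonneg ha0 hc0)]
  have step2 : 2 * sb ^ 2 * (s ^ 2 * a ^ 2 + t ^ 2 * c ^ 2)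
      ≤ s ^ 2 * a ^ 2 + t ^ 2 * c ^ 2 - 2 * s * t * (1 - 2 * sb ^ 2) * (a * c) := by
    nlinarith [mul_nonneg (by linarith : (0:ℝ) ≤ 1 - 2 * sb ^ 2)
      (sq_nonneg (s * a - t * c))]
  have hstsq : 1 / 2 ≤ s ^ 2 + t ^ 2 := by nlinarith [sq_nonneg (s - t)]
  have step3 : ℓ ^ 2 * (1 / 2) ≤ s ^ 2 * a ^ 2 + t ^ 2 * c ^ 2 := by
    nlinarith [mul_nonneg (sq_nonneg s) (sub_nonneg.2 haa),
      mul_nonneg (sq_nonneg t) (sub_nonneg.2 hcc),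
      mul_le_mul_of_nonneg_left hstsq (sq_nonneg ℓ)]
  have key2 : (ℓ * sb) ^ 2 ≤ n ^ 2 := by
    calc (ℓ * sb) ^ 2 = 2 * sb ^ 2 * (ℓ ^ 2 * (1 / 2)) := by ring
      _ ≤ 2 * sb ^ 2 * (s ^ 2 * a ^ 2 + t ^ 2 * c ^ 2) :=
          mul_le_mul_of_nonneg_left step3 (by positivity)
      _ ≤ s ^ 2 * a ^ 2 + t ^ 2 * c ^ 2 - 2 * s * t * (1 - 2 * sb ^ 2) * (a * c) := step2
      _ ≤ n ^ 2 := step1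
  have h := Real.sqrt_le_sqrt key2
  rwa [Real.sqrt_sq (mul_nonneg hl.le hsb0), Real.sqrt_sq hn] at h

private lemma key_dist_lemma (A B C : E2) (ℓ β : ℝ)
    (hl : 0 < ℓ) (hb : 0 < β)
    (hAB : ℓ ≤ ‖A - B‖) (hCB : ℓ ≤ ‖C - B‖)
    (hang₁ : β ≤ ∠ A B C) (hang₂ : ∠ A B C ≤ Real.pi - β)
    (Q : E2) (hQ : Q ∈ segment ℝ A C) :
    ℓ * Real.sin (β / 2) ≤ ‖B - Q‖ := by
  obtain ⟨s, t, hs, ht, hst, rfl⟩ := hQ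
  have hβ2 : β ≤ Real.pi / 2 := by linarith
  have hcosb : 0 ≤ Real.cos β :=
    Real.cos_nonneg_of_mem_Icc ⟨by linarith, hβ2⟩
  have hθ0 : 0 ≤ ∠ A B C := EuclideanGeometry.angle_nonneg A B C
  have hcosθ : Real.cos (Real.pi - β) ≤ Real.cos (∠ A B C) :=
    Real.cos_le_cos_of_nonneg_of_le_pi hθ0 (by linarith) hang₂
  rw [Real.cos_pi_sub] at hcosθ
  have hsin0 : 0 ≤ Real.sin (β / 2) :=
    Real.sin_nonneg_of_nonneg_of_le_pi (by linarith) (by linarith [Real.pi_gt_three])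
  have hsc : Real.sin (β / 2) ^ 2 + Real.cos (β / 2) ^ 2 = 1 := Real.sin_sq_add_cos_sq _
  have hcos2 : Real.cos β = 1 - 2 * Real.sin (β / 2) ^ 2 := by
    have h := Real.cos_two_mul (β / 2)
    have h2 : 2 * (β / 2) = β := by ring
    rw [h2] at h
    nlinarith [h, hsc]
  have hinner : ⟪A - B, C - B⟫ = Real.cos (∠ A B C) * (‖A - B‖ * ‖C - B‖) := by
    rw [EuclideanGeometry.angle]
    simp only [vsub_eq_sub]
    exact (InnerProductGeometry.cos_angle_mul_norm_mul_norm _ _).symm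
  have hvec : B - (s • A + t • C) = s • (B - A) + t • (B - C) := by
    calc B - (s • A + t • C) = (s • B + t • B) - (s • A + t • C) := by
          rw [← add_smul, hst, one_smul]
      _ = s • (B - A) + t • (B - C) := by module
  have hexp : ‖B - (s • A + t • C)‖ ^ 2 = s ^ 2 * ‖A - B‖ ^ 2 + t ^ 2 * ‖C - B‖ ^ 2
      + 2 * s * t * (Real.cos (∠ A B C) * (‖A - B‖ * ‖C - B‖)) := by
    rw [hvec, ← hinner, norm_add_sq_real, norm_smul, norm_smul]
    simp only [real_inner_smul_left, real_inner_smul_right, Real.norm_eq_abs,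
      mul_pow, sq_abs]
    have h1 : ‖B - A‖ = ‖A - B‖ := by rw [← norm_neg]; congr 1; abel
    have h2 : ‖B - C‖ = ‖C - B‖ := by rw [← norm_neg]; congr 1; abel
    have h3 : ⟪B - A, B - C⟫ = ⟪A - B, C - B⟫ := by
      rw [show A - B = -(B - A) by abel, show C - B = -(B - C) by abel, inner_neg_neg]
    rw [h1, h2, h3]; ring
  exact alg_lemma ℓ ‖A - B‖ ‖C - B‖ s t (Real.cos (∠ A B C)) (Real.sin (β / 2))
    ‖B - (s • A + t • C)‖ hl hAB hCB hs ht hst hsin0 (by linarith)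
    (by linarith) (norm_nonneg _) hexp

/-- If `‖A − B‖ ≥ ℓ`, `‖C − B‖ ≥ ℓ`, `β ≤ ∠(A,B,C) ≤ π − β`,
and `0 < δ ≤ (ℓ/2)·sin(β/2)`, then any points `A'`, `B'`, `C'` within distance
`δ` of `A`, `B`, `C` satisfy `∠(A',B',C') < π`; in particular `B'` does not lie
strictly between `A'` and `C'`. -/
theorem angle_stays_bent_under_perturbation (A B C : E2) (ℓ β δ : ℝ)
    (hl : 0 < ℓ) (hb : 0 < β)
    (hAB : ℓ ≤ ‖A - B‖) (hCB : ℓ ≤ ‖C - B‖)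
    (hang₁ : β ≤ ∠ A B C) (hang₂ : ∠ A B C ≤ Real.pi - β)
    (hδ₀ : 0 < δ) (hδ : δ ≤ (ℓ / 2) * Real.sin (β / 2))
    (A' B' C' : E2)
    (hA : ‖A - A'‖ < δ) (hB : ‖B - B'‖ < δ) (hC : ‖C - C'‖ < δ) :
    ∠ A' B' C' < Real.pi ∧ B' ∉ openSegment ℝ A' C' := by
  have hseg : B' ∉ segment ℝ A' C' := by
    rintro ⟨s, t, hs, ht, hst, hB'⟩
    have hQmem : s • A + t • C ∈ segment ℝ A C := ⟨s, t, hs, ht, hst, rfl⟩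
    have hkey := key_dist_lemma A B C ℓ β hl hb hAB hCB hang₁ hang₂ _ hQmem
    have hdiff : B' - (s • A + t • C) = s • (A' - A) + t • (C' - C) := by
      rw [← hB']; module
    have h1 : ‖B' - (s • A + t • C)‖ ≤ s * δ + t * δ := by
      rw [hdiff]
      calc ‖s • (A' - A) + t • (C' - C)‖ ≤ ‖s • (A' - A)‖ + ‖t • (C' - C)‖ :=
            norm_add_le _ _
        _ = s * ‖A - A'‖ + t * ‖C - C'‖ := by
            rw [norm_smul, norm_smul, Real.norm_eq_abs, Real.norm_eq_abs,
              abs_of_nonneg hs, abs_of_nonneg ht, ← norm_neg (A' - A),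
              ← norm_neg (C' - C), neg_sub, neg_sub]
        _ ≤ s * δ + t * δ :=
            add_le_add (mul_le_mul_of_nonneg_left hA.le hs)
              (mul_le_mul_of_nonneg_left hC.le ht)
    have h2 : ‖B - (s • A + t • C)‖ < 2 * δ := by
      calc ‖B - (s • A + t • C)‖ ≤ ‖B - B'‖ + ‖B' - (s • A + t • C)‖ := by
            have : B - (s • A + t • C) = (B - B') + (B' - (s • A + t • C)) := by abel
            rw [this]; exact norm_add_le _ _
        _ < δ + (s * δ + t * δ) := by linarith
        _ = 2 * δ := by rw [show s * δ + t * δ = (s + t) * δ by ring, hst]; ring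
    have : 2 * δ ≤ ℓ * Real.sin (β / 2) := by linarith
    linarith
  refine ⟨?_, fun h => hseg (openSegment_subset_segment ℝ A' C' h)⟩
  refine lt_of_le_of_ne (EuclideanGeometry.angle_le_pi A' B' C') (fun h => ?_)
  exact hseg ((EuclideanGeometry.angle_eq_pi_iff_sbtw.mp h).wbtw.mem_segment)
end
end

section
/- Let (v_0,v_1,v_2,v_3) and (u_0,u_1,u_2,u_3) be two simple quadrilaterals in ℝ² with equal corresponding edge lengths (‖v_{(i+1) mod 4} − v_i‖ = ‖u_{(i+1) mod 4} − u_i‖ for all i), each reflex at its third vertex, i.e. v_2 lies in the interior of the triangle v_0 v_1 v_3 and u_2 lies in the interior of the triangle u_0 u_1 u_3. If ‖v_2 − v_0‖ < ‖u_2 − u_0‖, then all joints are more open in the second quadrilateral: ∠(v_3,v_0,v_1) < ∠(u_3,u_0,u_1), ∠(v_0,v_1,v_2) < ∠(u_0,u_1,u_2), ∠(v_2,v_3,v_0) < ∠(u_2,u_3,u_0), and ∠(v_1,v_2,v_3) < ∠(u_1,u_2,u_3) (the last being the exterior angle at the reflex joint). -/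
/-!
Let `d = |v₀v₂|`. The joints at `v₁` and `v₃` lie in the triangles `v₀v₁v₂` and `v₀v₃v₂`,
whose other two sides are fixed, so they open as `d` grows (law of cosines).

Since `v₂` lies inside the triangle `v₀v₁v₃`, the three angles at `v₂` sum to `2π`, so the
exterior angle at `v₂` is `2π - (α(d) + β(d))`, where `α`, `β` are the angles at `v₂` of those two
triangles, with sides `b = |v₁v₂|` and `c = |v₃v₂|` adjacent to `d`. Differentiating,
`(α + β)'(t) = (cot α + cot β) / t - 1 / (b sin α) - 1 / (c sin β)`, which is negative as long as
`α + β ≥ π`, because then `cot α + cot β = sin (α + β) / (sin α sin β) ≤ 0`. The condition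
`α + β ≥ π` means `cos α + cos β ≤ 0`, and it persists as `t` decreases; it holds at the longer
diagonal since the exterior angle is at most `π`. So the exterior angle at `v₂` grows with `d`.

Finally, the joints at `v₂` and `v₀` are the angles opposite the other diagonal `v₁v₃` in the
triangles `v₁v₂v₃` and `v₁v₀v₃`, so they grow together.
-/

open scoped EuclideanGeometry RealInnerProductSpace

noncomputable section

/-- Simplicity of a closed polygonal chain with vertices `v 0, …, v (n-1)`
and edges `[v i, v ((i+1) % n)]`. -/
def IsSimpleClosedChain {E : Type*} [NormedAddCommGroup E] [NormedSpace ℝ E]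
    (n : ℕ) (v : ℕ → E) : Prop :=
  (∀ i < n, ∀ j < n, i ≠ j → (i + 1) % n ≠ j → (j + 1) % n ≠ i →
    Disjoint (segment ℝ (v i) (v ((i+1) % n))) (segment ℝ (v j) (v ((j+1) % n)))) ∧
  ∀ i < n, segment ℝ (v i) (v ((i+1) % n)) ∩
      segment ℝ (v ((i+1) % n)) (v ((i+2) % n)) = {v ((i+1) % n)}

/-- A motion of a closed chain: continuous on `[0,1]`, starting at `v`,
preserving all edge lengths and simplicity. -/
def IsClosedChainMotion {E : Type*} [NormedAddCommGroup E] [NormedSpace ℝ E]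
    (n : ℕ) (v : ℕ → E) (f : ℝ → ℕ → E) : Prop :=
  (∀ i < n, ContinuousOn (fun t => f t i) (Set.Icc (0:ℝ) 1)) ∧
  (∀ i < n, f 0 i = v i) ∧
  (∀ t ∈ Set.Icc (0:ℝ) 1, ∀ i < n,
    dist (f t ((i+1) % n)) (f t i) = dist (v ((i+1) % n)) (v i)) ∧
  (∀ t ∈ Set.Icc (0:ℝ) 1, IsSimpleClosedChain n (f t))

/-- A simple quadrilateral `(v 0, v 1, v 2, v 3)` that is reflex at `v 2`:
`v 2` lies in the interior of the triangle `v 0 v 1 v 3`. -/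
def SimpleReflexQuad (v : ℕ → E2) : Prop :=
  IsSimpleClosedChain 4 v ∧ v 2 ∈ interior (convexHull ℝ ({v 0, v 1, v 3} : Set E2))

open Real Module

/-- The angle opposite `a` in a triangle with side lengths `a`, `b`, `c`. -/
def triangleAngle (a b c : ℝ) : ℝ :=
  arccos ((b ^ 2 + c ^ 2 - a ^ 2) / (2 * b * c))

theorem pi_le_arccos_add_arccos_iff {x y : ℝ} (hx : x ∈ Set.Icc (-1) 1)
    (hy : y ∈ Set.Icc (-1) 1) : π ≤ arccos x + arccos y ↔ x + y ≤ 0 := by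
  have hy' : -y ∈ Set.Icc (-1 : ℝ) 1 := ⟨by linarith [hy.2], by linarith [hy.1]⟩
  rw [← sub_le_iff_le_add, ← arccos_neg, strictAntiOn_arccos.le_iff_ge hy' hx]
  constructor <;> intro <;> linarith

section TriangleAngle

variable {a b c e t t' : ℝ}

theorem abs_cosine_rule_lt_one (h₁ : |a - b| < t) (h₂ : t < a + b) :
    |(b ^ 2 + t ^ 2 - a ^ 2) / (2 * b * t)| < 1 := by
  obtain ⟨h₃, h₄⟩ := abs_lt.1 h₁
  have hbt : 0 < 2 * b * t := by nlinarith
  rw [abs_div, abs_of_pos hbt, div_lt_one hbt, abs_lt]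
  constructor <;> nlinarith

theorem cos_triangleAngle (h₁ : |a - b| < t) (h₂ : t < a + b) :
    cos (triangleAngle a b t) = (b ^ 2 + t ^ 2 - a ^ 2) / (2 * b * t) := by
  obtain ⟨h₃, h₄⟩ := abs_lt.1 (abs_cosine_rule_lt_one h₁ h₂)
  exact cos_arccos h₃.le h₄.le

theorem sin_triangleAngle_pos (h₁ : |a - b| < t) (h₂ : t < a + b) :
    0 < sin (triangleAngle a b t) := by
  rw [triangleAngle, sin_arccos, sqrt_pos, sub_pos, sq_lt_one_iff_abs_lt_one]
  exact abs_cosine_rule_lt_one h₁ h₂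

theorem hasDerivAt_triangleAngle (h₁ : |a - b| < t) (h₂ : t < a + b) :
    HasDerivAt (triangleAngle a b)
      ((cos (triangleAngle a b t) / t - 1 / b) / sin (triangleAngle a b t)) t := by
  have hb : 0 < b := by linarith [le_abs_self (a - b)]
  have ht : 0 < t := (abs_nonneg _).trans_lt h₁
  obtain ⟨h₃, h₄⟩ := abs_lt.1 (abs_cosine_rule_lt_one h₁ h₂)
  have hquot : HasDerivAt (fun s => (b ^ 2 + s ^ 2 - a ^ 2) / (2 * b * s))
      ((t ^ 2 + a ^ 2 - b ^ 2) / (2 * b * t ^ 2)) t := by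
    have := ((hasDerivAt_pow 2 t).const_add (b ^ 2) |>.sub_const (a ^ 2)).div
      ((hasDerivAt_id t).const_mul (2 * b)) (by positivity)
    refine this.congr_deriv ?_
    simp only [id, Nat.cast_ofNat]
    field_simp
    ring
  refine ((hasDerivAt_arccos h₃.ne' h₄.ne).comp t hquot).congr_deriv ?_
  have hsin := sin_triangleAngle_pos h₁ h₂
  rw [cos_triangleAngle h₁ h₂]
  rw [triangleAngle, sin_arccos] at hsin ⊢
  field_simp
  ring

theorem pi_le_triangleAngle_add_triangleAngle_of_le (hab : |a - b| < t) (hab' : t' < a + b)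
    (hec : |e - c| < t) (hec' : t' < e + c) (htt' : t ≤ t')
    (hπ : π ≤ triangleAngle a b t' + triangleAngle e c t') :
    π ≤ triangleAngle a b t + triangleAngle e c t := by
  have hb : 0 < b := by linarith [le_abs_self (a - b)]
  have hc : 0 < c := by linarith [le_abs_self (e - c)]
  have ht : 0 < t := (abs_nonneg _).trans_lt hab
  have hdom : ∀ {a b s : ℝ}, |a - b| < s → s < a + b →
      (b ^ 2 + s ^ 2 - a ^ 2) / (2 * b * s) ∈ Set.Icc (-1 : ℝ) 1 := fun h₁ h₂ =>
    abs_le.1 (abs_cosine_rule_lt_one h₁ h₂).le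
  rw [triangleAngle, triangleAngle, pi_le_arccos_add_arccos_iff (hdom (hab.trans_le htt') hab')
    (hdom (hec.trans_le htt') hec')] at hπ
  rw [triangleAngle, triangleAngle, pi_le_arccos_add_arccos_iff
    (hdom hab (htt'.trans_lt hab')) (hdom hec (htt'.trans_lt hec'))]
  -- the sum of the two cosines has the sign of a quantity increasing in `s`
  have hsum : ∀ s, 0 < s →
      (b ^ 2 + s ^ 2 - a ^ 2) / (2 * b * s) + (c ^ 2 + s ^ 2 - e ^ 2) / (2 * c * s)
        = ((b + c) * s ^ 2 - (c * (a ^ 2 - b ^ 2) + b * (e ^ 2 - c ^ 2))) / (2 * b * c * s) := by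
    intro s hs
    field_simp
    ring
  rw [hsum t ht, div_le_iff₀ (by positivity), zero_mul]
  have ht' : 0 < t' := ht.trans_le htt'
  rw [hsum t' ht', div_le_iff₀ (by positivity), zero_mul] at hπ
  nlinarith [mul_le_mul htt' htt' ht.le (ht.le.trans htt')]

theorem exists_hasDerivAt_triangleAngle_add_triangleAngle_neg (hab : |a - b| < t)
    (hab' : t < a + b) (hec : |e - c| < t) (hec' : t < e + c)
    (hπ : π ≤ triangleAngle a b t + triangleAngle e c t) :
    ∃ D < 0, HasDerivAt (fun s => triangleAngle a b s + triangleAngle e c s) D t := by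
  refine ⟨_, ?_, (hasDerivAt_triangleAngle hab hab').add (hasDerivAt_triangleAngle hec hec')⟩
  have hb : 0 < b := by linarith [le_abs_self (a - b)]
  have hc : 0 < c := by linarith [le_abs_self (e - c)]
  have ht : 0 < t := (abs_nonneg _).trans_lt hab
  have hα := sin_triangleAngle_pos hab hab'
  have hβ := sin_triangleAngle_pos hec hec'
  set α := triangleAngle a b t
  set β := triangleAngle e c t
  have hsin : sin (α + β) ≤ 0 := by
    rw [← sin_sub_two_pi]
    have : α ≤ π := arccos_le_pi _
    have : β ≤ π := arccos_le_pi _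
    apply sin_nonpos_of_nonpos_of_neg_pi_le <;> linarith
  have hsplit : (cos α / t - 1 / b) / sin α + (cos β / t - 1 / c) / sin β
      = sin (α + β) / (t * sin α * sin β) - (1 / (b * sin α) + 1 / (c * sin β)) := by
    rw [sin_add]
    field_simp
    ring
  rw [hsplit]
  have h₁ : sin (α + β) / (t * sin α * sin β) ≤ 0 :=
    div_nonpos_of_nonpos_of_nonneg hsin (by positivity)
  have h₂ : 0 < 1 / (b * sin α) + 1 / (c * sin β) := by positivity
  linarith

theorem triangleAngle_add_triangleAngle_lt (hab : |a - b| < t) (hab' : t' < a + b)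
    (hec : |e - c| < t) (hec' : t' < e + c) (htt' : t < t')
    (hπ : π ≤ triangleAngle a b t' + triangleAngle e c t') :
    triangleAngle a b t' + triangleAngle e c t' < triangleAngle a b t + triangleAngle e c t := by
  have hderiv : ∀ s ∈ Set.Icc t t',
      ∃ D < 0, HasDerivAt (fun s => triangleAngle a b s + triangleAngle e c s) D s :=
    fun s hs => exists_hasDerivAt_triangleAngle_add_triangleAngle_neg (hab.trans_le hs.1)
      (hs.2.trans_lt hab') (hec.trans_le hs.1) (hs.2.trans_lt hec')
      (pi_le_triangleAngle_add_triangleAngle_of_le (hab.trans_le hs.1) hab' (hec.trans_le hs.1)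
        hec' hs.2 hπ)
  refine strictAntiOn_of_deriv_neg (f := fun s => triangleAngle a b s + triangleAngle e c s)
    (convex_Icc t t') (fun s hs => ?_) (fun s hs => ?_)
    ⟨le_rfl, htt'.le⟩ ⟨htt'.le, le_rfl⟩ htt'
  · obtain ⟨D, -, hD⟩ := hderiv s hs
    exact hD.continuousAt.continuousWithinAt
  · rw [interior_Icc] at hs
    obtain ⟨D, hD, hD'⟩ := hderiv s (Set.Ioo_subset_Icc_self hs)
    rwa [hD'.deriv]

end TriangleAngle

namespace InnerProductGeometry

variable {V : Type*} [NormedAddCommGroup V] [InnerProductSpace ℝ V]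

theorem angle_add_angle_add_angle_eq_two_pi {x y z : V} {a b c : ℝ} (ha : 0 < a) (hb : 0 ≤ b)
    (hc : 0 ≤ c) (hx : x ≠ 0) (h : a • x + b • y + c • z = 0) :
    angle x y + angle x z + angle y z = 2 * π := by
  have hmem : -x ∈ Submodule.span NNReal {y, z} := by
    rw [Submodule.mem_span_pair]
    refine ⟨(b / a).toNNReal, (c / a).toNNReal, ?_⟩
    rw [NNReal.smul_def, NNReal.smul_def, Real.coe_toNNReal _ (by positivity),
      Real.coe_toNNReal _ (by positivity)]
    apply smul_right_injective V ha.ne'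
    simp only [smul_add, smul_smul, mul_div_cancel₀ _ ha.ne', smul_neg]
    linear_combination (norm := module) h
  have hsplit := angle_eq_angle_add_add_angle_add_of_mem_span (neg_ne_zero.2 hx) hmem
  rw [angle_neg_right, angle_neg_left, angle_comm y x] at hsplit
  linarith

end InnerProductGeometry

namespace EuclideanGeometry

variable {V P : Type*} [NormedAddCommGroup V] [InnerProductSpace ℝ V] [MetricSpace P]
  [NormedAddTorsor V P]

theorem angle_eq_triangleAngle {p₁ p₂ p₃ : P} (h₁ : p₁ ≠ p₂) (h₃ : p₃ ≠ p₂) :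
    ∠ p₁ p₂ p₃ = triangleAngle (dist p₃ p₁) (dist p₁ p₂) (dist p₃ p₂) := by
  have hcos : (dist p₁ p₂ ^ 2 + dist p₃ p₂ ^ 2 - dist p₃ p₁ ^ 2) / (2 * dist p₁ p₂ * dist p₃ p₂)
      = cos (∠ p₁ p₂ p₃) := by
    have := dist_pos.2 h₁
    have := dist_pos.2 h₃
    rw [div_eq_iff (by positivity), dist_comm p₃ p₁]
    linear_combination -law_cos p₁ p₂ p₃
  rw [triangleAngle, hcos, arccos_cos (angle_nonneg _ _ _) (angle_le_pi _ _ _)]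

theorem angle_lt_angle_iff_dist_lt_dist {p₁ p₂ p₃ q₁ q₂ q₃ : P} (h₁ : dist p₁ p₂ = dist q₁ q₂)
    (h₃ : dist p₃ p₂ = dist q₃ q₂) : ∠ p₁ p₂ p₃ < ∠ q₁ q₂ q₃ ↔ dist p₁ p₃ < dist q₁ q₃ := by
  have hp := law_cos p₁ p₂ p₃
  have hq := law_cos q₁ q₂ q₃
  rw [← h₁, ← h₃] at hq
  obtain h₀ | h₀ := (mul_nonneg dist_nonneg dist_nonneg : 0 ≤ dist p₁ p₂ * dist p₃ p₂).eq_or_lt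
  · have hangle : ∠ p₁ p₂ p₃ = ∠ q₁ q₂ q₃ := by
      rcases mul_eq_zero.1 h₀.symm with h | h
      · have hq : dist q₁ q₂ = 0 := h₁ ▸ h
        rw [dist_eq_zero.1 h, dist_eq_zero.1 hq, angle_self_left, angle_self_left]
      · have hq : dist q₃ q₂ = 0 := h₃ ▸ h
        rw [dist_eq_zero.1 h, dist_eq_zero.1 hq, angle_self_right, angle_self_right]
    have hdist : dist p₁ p₃ = dist q₁ q₃ := by
      rw [← mul_self_inj dist_nonneg dist_nonneg]
      linear_combination hp - hq + 2 * (cos (∠ p₁ p₂ p₃) - cos (∠ q₁ q₂ q₃)) * h₀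
    rw [hangle, hdist, lt_self_iff_false, lt_self_iff_false]
  · rw [← strictAntiOn_cos.lt_iff_gt ⟨angle_nonneg _ _ _, angle_le_pi _ _ _⟩
      ⟨angle_nonneg _ _ _, angle_le_pi _ _ _⟩, mul_self_lt_mul_self_iff dist_nonneg dist_nonneg,
      hp, hq]
    constructor <;> intro <;> nlinarith

theorem dist_lt_dist_add_dist_of_not_collinear {p₁ p₂ p₃ : P}
    (h : ¬Collinear ℝ {p₁, p₂, p₃}) : dist p₁ p₃ < dist p₁ p₂ + dist p₂ p₃ :=
  dist_lt_dist_add_dist_iff.2 fun hw => h hw.collinear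

theorem abs_dist_sub_dist_lt_dist_of_not_collinear {p₁ p₂ p₃ : P}
    (h : ¬Collinear ℝ {p₁, p₂, p₃}) : |dist p₁ p₂ - dist p₂ p₃| < dist p₁ p₃ := by
  have h₁ := dist_lt_dist_add_dist_of_not_collinear (p₁ := p₁) (p₂ := p₃) (p₃ := p₂)
    (by rwa [Set.pair_comm])
  have h₂ := dist_lt_dist_add_dist_of_not_collinear (p₁ := p₂) (p₂ := p₁) (p₃ := p₃)
    (by rwa [Set.insert_comm])
  rw [dist_comm p₃ p₂] at h₁
  rw [dist_comm p₂ p₁] at h₂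
  rw [abs_sub_lt_iff]
  constructor <;> linarith

end EuclideanGeometry

theorem AffineBasis.not_collinear_of_coord_ne_zero {ι k V P : Type*} [Field k] [AddCommGroup V]
    [Module k V] [AddTorsor V P] (b : AffineBasis ι k P) {i j l : ι} (hij : i ≠ j) (hli : l ≠ i)
    (hlj : l ≠ j) {p : P} (hp : b.coord l p ≠ 0) : ¬Collinear k {b i, b j, p} := by
  intro h
  obtain ⟨r, rfl⟩ := mem_affineSpan_pair_iff_exists_lineMap_eq.1
    (h.mem_affineSpan_of_mem_of_ne (p₃ := p) (by simp) (by simp) (by simp)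
      (b.ind.injective.ne hij))
  simp [AffineMap.apply_lineMap, b.coord_apply_ne hli, b.coord_apply_ne hlj] at hp

theorem exists_affineBasis_coord_pos_of_mem_interior_convexHull {V : Type*}
    [NormedAddCommGroup V] [NormedSpace ℝ V] (hV : finrank ℝ V = 2) {p₀ p₁ p₂ p : V}
    (h : p ∈ interior (convexHull ℝ {p₀, p₁, p₂})) :
    ∃ b : AffineBasis (Fin 3) ℝ V, ⇑b = ![p₀, p₁, p₂] ∧ ∀ i, 0 < b.coord i p := by
  have : FiniteDimensional ℝ V := Module.finite_of_finrank_eq_succ hV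
  have hrange : Set.range ![p₀, p₁, p₂] = {p₀, p₁, p₂} := by
    rw [Matrix.range_cons, Matrix.range_cons_cons_empty, Set.singleton_union]
  have htop : affineSpan ℝ {p₀, p₁, p₂} = ⊤ :=
    interior_convexHull_nonempty_iff_affineSpan_eq_top.1 ⟨p, h⟩
  have hind : AffineIndependent ℝ ![p₀, p₁, p₂] := by
    rw [affineIndependent_iff_finrank_vectorSpan_eq ℝ _ (n := 2) (by simp), hrange,
      ← direction_affineSpan, htop, AffineSubspace.direction_top, finrank_top, hV]
  let b : AffineBasis (Fin 3) ℝ V := ⟨![p₀, p₁, p₂], hind, by rw [hrange, htop]⟩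
  refine ⟨b, rfl, ?_⟩
  rw [← hrange] at h
  exact (b.interior_convexHull ▸ h : p ∈ {x | ∀ i, 0 < b.coord i x})

namespace EuclideanGeometry

variable {V : Type*} [NormedAddCommGroup V] [InnerProductSpace ℝ V]

theorem angle_add_angle_add_angle_eq_two_pi_of_mem_interior_convexHull (hV : finrank ℝ V = 2)
    {p₀ p₁ p₂ p : V} (h : p ∈ interior (convexHull ℝ {p₀, p₁, p₂})) :
    ∠ p₀ p p₁ + ∠ p₀ p p₂ + ∠ p₁ p p₂ = 2 * π := by
  obtain ⟨b, hb, hpos⟩ := exists_affineBasis_coord_pos_of_mem_interior_convexHull hV h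
  have hcomb := b.linear_combination_coord_eq_self p
  have hsum := b.sum_coord_apply_eq_one p
  simp only [Fin.sum_univ_three, hb, Matrix.cons_val_zero, Matrix.cons_val_one,
    Matrix.cons_val_two, Matrix.head_cons, Matrix.tail_cons] at hcomb hsum
  have hne : p₀ - p ≠ 0 := by
    rw [sub_ne_zero]
    rintro rfl
    have := b.coord_apply_ne (i := 1) (j := 0) (by decide)
    rw [hb] at this
    exact (hpos 1).ne' this
  refine InnerProductGeometry.angle_add_angle_add_angle_eq_two_pi (hpos 0) (hpos 1).le
    (hpos 2).le hne ?_
  calc b.coord 0 p • (p₀ - p) + b.coord 1 p • (p₁ - p) + b.coord 2 p • (p₂ - p)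
      = (b.coord 0 p • p₀ + b.coord 1 p • p₁ + b.coord 2 p • p₂)
        - (b.coord 0 p + b.coord 1 p + b.coord 2 p) • p := by module
    _ = 0 := by rw [hcomb, hsum, one_smul, sub_self]

theorem not_collinear_of_mem_interior_convexHull (hV : finrank ℝ V = 2) {p₀ p₁ p₂ p : V}
    (h : p ∈ interior (convexHull ℝ {p₀, p₁, p₂})) : ¬Collinear ℝ {p₀, p₁, p} := by
  obtain ⟨b, hb, hpos⟩ := exists_affineBasis_coord_pos_of_mem_interior_convexHull hV h
  have := b.not_collinear_of_coord_ne_zero (i := 0) (j := 1) (l := 2) (by decide) (by decide)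
    (by decide) (hpos 2).ne'
  simpa [hb] using this

theorem angle_eq_two_pi_sub_triangleAngle_add_triangleAngle (hV : finrank ℝ V = 2)
    {p₀ p₁ p₂ p₃ : V} (h : p₂ ∈ interior (convexHull ℝ {p₀, p₁, p₃})) :
    ∠ p₁ p₂ p₃ = 2 * π - (triangleAngle (dist p₀ p₁) (dist p₁ p₂) (dist p₀ p₂)
      + triangleAngle (dist p₀ p₃) (dist p₃ p₂) (dist p₀ p₂)) := by
  have h₁ := not_collinear_of_mem_interior_convexHull hV h
  have h₃ : ¬Collinear ℝ {p₀, p₃, p₂} :=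
    not_collinear_of_mem_interior_convexHull hV (by rwa [Set.pair_comm] at h)
  have hsum := angle_add_angle_add_angle_eq_two_pi_of_mem_interior_convexHull hV h
  rw [angle_comm p₀ p₂ p₁, angle_comm p₀ p₂ p₃] at hsum
  rw [← angle_eq_triangleAngle (ne₂₃_of_not_collinear h₁) (ne₁₃_of_not_collinear h₁),
    ← angle_eq_triangleAngle (ne₂₃_of_not_collinear h₃) (ne₁₃_of_not_collinear h₃)]
  linarith

theorem angle_lt_angle_of_mem_interior_convexHull (hV : finrank ℝ V = 2)
    {p₀ p₁ p₂ p₃ q₀ q₁ q₂ q₃ : V} (hp : p₂ ∈ interior (convexHull ℝ {p₀, p₁, p₃}))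
    (hq : q₂ ∈ interior (convexHull ℝ {q₀, q₁, q₃})) (h₀₁ : dist p₀ p₁ = dist q₀ q₁)
    (h₁₂ : dist p₁ p₂ = dist q₁ q₂) (h₃₂ : dist p₃ p₂ = dist q₃ q₂)
    (h₀₃ : dist p₀ p₃ = dist q₀ q₃) (hd : dist p₀ p₂ < dist q₀ q₂) :
    ∠ p₁ p₂ p₃ < ∠ q₁ q₂ q₃ := by
  have hp' : p₂ ∈ interior (convexHull ℝ {p₀, p₃, p₁}) := by rwa [Set.pair_comm]
  have hq' : q₂ ∈ interior (convexHull ℝ {q₀, q₃, q₁}) := by rwa [Set.pair_comm]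
  have hp₁ := abs_dist_sub_dist_lt_dist_of_not_collinear
    (not_collinear_of_mem_interior_convexHull hV hp)
  have hp₃ := abs_dist_sub_dist_lt_dist_of_not_collinear
    (not_collinear_of_mem_interior_convexHull hV hp')
  have hq₁ := dist_lt_dist_add_dist_of_not_collinear
    (not_collinear_of_mem_interior_convexHull hV hq)
  have hq₃ := dist_lt_dist_add_dist_of_not_collinear
    (not_collinear_of_mem_interior_convexHull hV hq')
  have hπ := angle_le_pi q₁ q₂ q₃
  rw [angle_eq_two_pi_sub_triangleAngle_add_triangleAngle hV hq] at hπ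
  rw [angle_eq_two_pi_sub_triangleAngle_add_triangleAngle hV hp,
    angle_eq_two_pi_sub_triangleAngle_add_triangleAngle hV hq, h₀₁, h₁₂, h₃₂, h₀₃]
  rw [h₀₁, h₁₂] at hp₁
  rw [h₃₂, h₀₃] at hp₃
  linarith [triangleAngle_add_triangleAngle_lt hp₁ hq₁ hp₃ hq₃ hd (by linarith)]

end EuclideanGeometry

open EuclideanGeometry in
/-- For two simple quadrilaterals with equal corresponding
edge lengths, each reflex at its third vertex, if the interior diagonal of the
first is shorter then every joint is more open in the second: the undirected
angles at `v 0`, `v 1`, `v 3` (interior) and at `v 2` (exterior) are all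
strictly smaller in the first quadrilateral. -/
theorem reflex_quad_joints_open (v u : ℕ → E2)
    (hv : SimpleReflexQuad v) (hu : SimpleReflexQuad u)
    (hlen : ∀ i < 4, dist (v ((i+1) % 4)) (v i) = dist (u ((i+1) % 4)) (u i))
    (hdiag : dist (v 2) (v 0) < dist (u 2) (u 0)) :
    ∠ (v 3) (v 0) (v 1) < ∠ (u 3) (u 0) (u 1) ∧
    ∠ (v 0) (v 1) (v 2) < ∠ (u 0) (u 1) (u 2) ∧
    ∠ (v 2) (v 3) (v 0) < ∠ (u 2) (u 3) (u 0) ∧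
    ∠ (v 1) (v 2) (v 3) < ∠ (u 1) (u 2) (u 3) := by
  have h₁₀ : dist (v 1) (v 0) = dist (u 1) (u 0) := hlen 0 (by norm_num)
  have h₂₁ : dist (v 2) (v 1) = dist (u 2) (u 1) := hlen 1 (by norm_num)
  have h₃₂ : dist (v 3) (v 2) = dist (u 3) (u 2) := hlen 2 (by norm_num)
  have h₀₃ : dist (v 0) (v 3) = dist (u 0) (u 3) := hlen 3 (by norm_num)
  have h₁₂ : dist (v 1) (v 2) = dist (u 1) (u 2) := by rw [dist_comm, h₂₁, dist_comm]
  have hreflex : ∠ (v 1) (v 2) (v 3) < ∠ (u 1) (u 2) (u 3) :=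
    angle_lt_angle_of_mem_interior_convexHull finrank_euclideanSpace_fin hv.2 hu.2
      (by rw [dist_comm, h₁₀, dist_comm]) h₁₂ h₃₂ h₀₃ (by rwa [dist_comm, dist_comm (u 0)])
  have hdiag' : dist (v 3) (v 1) < dist (u 3) (u 1) := by
    rw [dist_comm, dist_comm (u 3)]
    exact (angle_lt_angle_iff_dist_lt_dist h₁₂ h₃₂).1 hreflex
  refine ⟨?_, ?_, ?_, hreflex⟩
  · rwa [angle_lt_angle_iff_dist_lt_dist (by rw [dist_comm, h₀₃, dist_comm]) h₁₀]
  · rw [angle_lt_angle_iff_dist_lt_dist (by rw [dist_comm, h₁₀, dist_comm]) h₂₁]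
    rwa [dist_comm, dist_comm (u 0)]
  · rwa [angle_lt_angle_iff_dist_lt_dist (by rw [dist_comm, h₃₂, dist_comm]) h₀₃]
end
end

section
/- Let (v_0,…,v_{n−1}) be a simple closed polygon in ℝ² with no three consecutive vertices collinear. Then there exists δ > 0 such that every sequence of points (w_0,…,w_{n−1}) with ‖w_i − v_i‖ < δ for all i forms a simple closed polygon with no three consecutive vertices collinear. -/
open scoped EuclideanGeometry RealInnerProductSpace

noncomputable section

/-!
Each condition on the perturbed polygon involves only finitely many vertices and is open in
them: non-collinearity because affine independence is an open condition, and disjointness of two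
nonadjacent edges because disjoint compact segments have disjoint thickenings, and a segment with
nearby endpoints lies in the thickening by convexity. Finitely many open conditions hold on a
common neighbourhood. Adjacent edges of the perturbed polygon then meet only in their common
vertex, since their three endpoints are still not collinear.
-/

open Filter Topology Metric

theorem segment_inter_segment_eq_singleton_of_not_collinear {V : Type*} [AddCommGroup V]
    [Module ℝ V] {a b c : V}
    (h : ¬ Collinear ℝ ({a, b, c} : Set V)) : segment ℝ a b ∩ segment ℝ b c = {b} := by
  refine Set.Subset.antisymm (fun x ⟨hab, hbc⟩ => ?_)
    (by simp [left_mem_segment, right_mem_segment])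
  by_contra hxb
  rw [mem_segment_iff_wbtw] at hab hbc
  have ha : a ∈ line[ℝ, x, b] :=
    hab.collinear.mem_affineSpan_of_mem_of_ne (by simp) (by simp) (by simp) hxb
  have hc : c ∈ line[ℝ, x, b] :=
    hbc.collinear.mem_affineSpan_of_mem_of_ne (by simp) (by simp) (by simp) hxb
  exact h ((collinear_insert_insert_of_mem_affineSpan_pair ha hc).subset
    (by simp [Set.insert_subset_iff]))

section Perturbation

variable {E : Type*} [NormedAddCommGroup E] [NormedSpace ℝ E]

theorem isCompact_segment (a b : E) : IsCompact (segment ℝ a b) := by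
  rw [segment_eq_image_lineMap]
  exact isCompact_Icc.image AffineMap.lineMap_continuous

theorem segment_subset_thickening {δ : ℝ} {a b a' b' : E} (ha : dist a' a < δ)
    (hb : dist b' b < δ) : segment ℝ a' b' ⊆ thickening δ (segment ℝ a b) :=
  ((convex_segment a b).thickening δ).segment_subset
    (mem_thickening_iff.2 ⟨a, left_mem_segment ℝ a b, ha⟩)
    (mem_thickening_iff.2 ⟨b, right_mem_segment ℝ a b, hb⟩)

theorem isSimpleClosedChain_of_not_collinear {n : ℕ} (hn : 0 < n) {w : ℕ → E}
    (hdisj : ∀ i < n, ∀ j < n, i ≠ j → (i + 1) % n ≠ j → (j + 1) % n ≠ i →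
      Disjoint (segment ℝ (w i) (w ((i + 1) % n))) (segment ℝ (w j) (w ((j + 1) % n))))
    (hcol : ∀ i < n, ¬ Collinear ℝ ({w ((i + n - 1) % n), w i, w ((i + 1) % n)} : Set E)) :
    IsSimpleClosedChain n w := by
  refine ⟨hdisj, fun i hi => segment_inter_segment_eq_singleton_of_not_collinear ?_⟩
  have hpred : ((i + 1) % n + n - 1) % n = i := by
    rw [show (i + 1) % n + n - 1 = (i + 1) % n + (n - 1) by omega, Nat.mod_add_mod,
      show i + 1 + (n - 1) = i + n by omega, Nat.add_mod_right, Nat.mod_eq_of_lt hi]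
  simpa only [hpred, Nat.mod_add_mod] using hcol ((i + 1) % n) (Nat.mod_lt _ hn)

variable {α : Type*} {l : Filter α}

theorem Filter.Tendsto.eventually_disjoint_segment {fa fb fc fd : α → E} {a b c d : E}
    (ha : Tendsto fa l (𝓝 a)) (hb : Tendsto fb l (𝓝 b)) (hc : Tendsto fc l (𝓝 c))
    (hd : Tendsto fd l (𝓝 d)) (h : Disjoint (segment ℝ a b) (segment ℝ c d)) :
    ∀ᶠ x in l, Disjoint (segment ℝ (fa x) (fb x)) (segment ℝ (fc x) (fd x)) := by
  obtain ⟨δ, hδ, hthick⟩ :=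
    h.exists_thickenings (isCompact_segment a b) (isCompact_segment c d).isClosed
  filter_upwards [ha (ball_mem_nhds a hδ), hb (ball_mem_nhds b hδ), hc (ball_mem_nhds c hδ),
    hd (ball_mem_nhds d hδ)] with x hxa hxb hxc hxd
  exact hthick.mono (segment_subset_thickening hxa hxb) (segment_subset_thickening hxc hxd)

theorem Filter.Tendsto.eventually_not_collinear [FiniteDimensional ℝ E] {fa fb fc : α → E}
    {a b c : E} (ha : Tendsto fa l (𝓝 a)) (hb : Tendsto fb l (𝓝 b)) (hc : Tendsto fc l (𝓝 c))
    (h : ¬ Collinear ℝ ({a, b, c} : Set E)) :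
    ∀ᶠ x in l, ¬ Collinear ℝ ({fa x, fb x, fc x} : Set E) := by
  have hp : Tendsto (fun x => ![fa x, fb x, fc x]) l (𝓝 ![a, b, c]) :=
    tendsto_pi_nhds.2 fun i => by fin_cases i <;> assumption
  simp_rw [← affineIndependent_iff_not_collinear_set] at h ⊢
  exact hp (isOpen_setOfPred_affineIndependent.mem_nhds h)

end Perturbation

section PrefixNhds

variable {X : Type*} {n : ℕ} {v : ℕ → X}

def prefixNhds [TopologicalSpace X] (n : ℕ) (v : ℕ → X) : Filter (ℕ → X) :=
  comap (fun w (i : Fin n) => w i) (𝓝 fun i => v i)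

theorem tendsto_apply_prefixNhds [TopologicalSpace X] {i : ℕ} (hi : i < n) :
    Tendsto (fun w => w i) (prefixNhds n v) (𝓝 (v i)) :=
  ((continuous_apply (⟨i, hi⟩ : Fin n)).tendsto fun j : Fin n => v j).comp tendsto_comap

theorem exists_pos_of_eventually_prefixNhds [PseudoMetricSpace X] {P : (ℕ → X) → Prop}
    (h : ∀ᶠ w in prefixNhds n v, P w) :
    ∃ δ > 0, ∀ w, (∀ i < n, dist (w i) (v i) < δ) → P w := by
  obtain ⟨s, hs, hsP⟩ := mem_comap.1 h
  obtain ⟨δ, hδ, hball⟩ := Metric.mem_nhds_iff.1 hs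
  refine ⟨δ, hδ, fun w hw => hsP (hball ?_)⟩
  rw [mem_ball, dist_pi_lt_iff hδ]
  exact fun i => hw i i.2

end PrefixNhds

/-- For a simple closed polygon in the plane with no three
consecutive vertices collinear there is a `δ > 0` such that every `δ`-perturbation
of the vertices is again a simple closed polygon with no three consecutive
vertices collinear. -/
theorem simple_polygon_perturbation (n : ℕ) (hn : 3 ≤ n) (v : ℕ → E2)
    (hsimple : IsSimpleClosedChain n v)
    (hcol : ∀ i < n, ¬ Collinear ℝ ({v ((i + n - 1) % n), v i, v ((i + 1) % n)} : Set E2)) :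
    ∃ δ > (0:ℝ), ∀ w : ℕ → E2, (∀ i < n, dist (w i) (v i) < δ) →
      IsSimpleClosedChain n w ∧
      ∀ i < n, ¬ Collinear ℝ ({w ((i + n - 1) % n), w i, w ((i + 1) % n)} : Set E2) := by
  have hn0 : 0 < n := by omega
  have hw : ∀ i, Tendsto (fun w => w (i % n)) (prefixNhds n v) (𝓝 (v (i % n))) :=
    fun i => tendsto_apply_prefixNhds (Nat.mod_lt i hn0)
  have hnoncol : ∀ᶠ w in prefixNhds n v, ∀ i < n,
      ¬ Collinear ℝ ({w ((i + n - 1) % n), w i, w ((i + 1) % n)} : Set E2) :=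
    (Set.finite_lt_nat n).eventually_all.2 fun i hi =>
      (hw _).eventually_not_collinear (tendsto_apply_prefixNhds hi) (hw _) (hcol i hi)
  have hdisj : ∀ᶠ w in prefixNhds n v, ∀ i < n, ∀ j < n, i ≠ j → (i + 1) % n ≠ j →
      (j + 1) % n ≠ i →
      Disjoint (segment ℝ (w i) (w ((i + 1) % n))) (segment ℝ (w j) (w ((j + 1) % n))) := by
    refine (Set.finite_lt_nat n).eventually_all.2 fun i hi =>
      (Set.finite_lt_nat n).eventually_all.2 fun j hj => ?_
    simp only [eventually_imp_distrib_left]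
    exact fun hij hij' hji => (tendsto_apply_prefixNhds hi).eventually_disjoint_segment (hw _)
      (tendsto_apply_prefixNhds hj) (hw _) (hsimple.1 i hi j hj hij hij' hji)
  obtain ⟨δ, hδ, hclose⟩ := exists_pos_of_eventually_prefixNhds (hdisj.and hnoncol)
  refine ⟨δ, hδ, fun w hwv => ?_⟩
  obtain ⟨hdisj_w, hnoncol_w⟩ := hclose w hwv
  exact ⟨isSimpleClosedChain_of_not_collinear hn0 hdisj_w hnoncol_w, hnoncol_w⟩
end
end

section
/- Let (v_0,…,v_{n−1}) be an open polygonal chain in ℝ² that is monotone with respect to the x-axis, i.e. the x-coordinates of v_0,…,v_{n−1} are strictly increasing (such a chain is automatically simple). Then the chain can be straightened within the plane: there exists a motion of the chain in ℝ² ending in a configuration in which all vertices are collinear. -/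
set_option maxHeartbeats 1000000


open scoped EuclideanGeometry RealInnerProductSpace

noncomputable section

/-! ### Auxiliary material -/

/-- The first standard basis vector of the plane. -/
def e0 : E2 := EuclideanSpace.single 0 1
/-- The second standard basis vector of the plane. -/
def e1 : E2 := EuclideanSpace.single 1 1

lemma mk_apply0 (a b : ℝ) : (a • e0 + b • e1) 0 = a := by
  simp [e0, e1, PiLp.add_apply, PiLp.smul_apply, EuclideanSpace.single_apply]

lemma mk_apply1 (a b : ℝ) : (a • e0 + b • e1) 1 = b := by
  simp [e0, e1, PiLp.add_apply, PiLp.smul_apply, EuclideanSpace.single_apply]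

lemma decomp (p : E2) : p = p 0 • e0 + p 1 • e1 := by
  ext j
  fin_cases j <;> simp [e0, e1, PiLp.add_apply, PiLp.smul_apply, EuclideanSpace.single_apply]

lemma seg_coord {a b p : E2} (h : p ∈ segment ℝ a b) (k : Fin 2) :
    p k ∈ segment ℝ (a k) (b k) := by
  obtain ⟨u, w, hu, hw, huw, rfl⟩ := h
  exact ⟨u, w, hu, hw, huw, by simp [PiLp.add_apply, PiLp.smul_apply]⟩

/-- A chain with strictly increasing x-coordinates is simple. -/
lemma simple_of_monoX (n : ℕ) (w : ℕ → E2)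
    (h : ∀ i j : ℕ, i < j → j < n → w i 0 < w j 0) : IsSimpleOpenChain n w := by
  have key : ∀ {a b : ℕ} {p : E2}, a + 1 ≤ b → b < n → p ∈ segment ℝ (w a) (w b) →
      p 0 ∈ Set.Icc (w a 0) (w b 0) := by
    intro a b p hab hb hp
    have hle : w a 0 ≤ w b 0 := (h a b hab hb).le
    have := seg_coord hp 0
    rwa [segment_eq_Icc hle] at this
  constructor
  · intro i j hi hj hij
    rw [Set.disjoint_left]
    intro p hp hp'
    have h1 := (key (le_refl _) hi hp).2
    have h2 := (key (le_refl _) hj hp').1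
    have : w (i+1) 0 < w j 0 := h _ _ (by omega) (by omega)
    linarith
  · intro i hi
    apply Set.eq_singleton_iff_unique_mem.mpr
    constructor
    · exact ⟨right_mem_segment _ _ _, left_mem_segment _ _ _⟩
    · rintro p ⟨hp1, hp2⟩
      have h1 := (key (le_refl _) (by omega) hp1).2
      have h2 := (key (le_refl _) (by omega) hp2).1
      have hpe : p 0 = w (i+1) 0 := le_antisymm h1 h2
      obtain ⟨u, s, hu, hs, hus, rfl⟩ := hp1
      have hc : (u • w i + s • w (i+1)) 0 = u * w i 0 + s * w (i+1) 0 := by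
        simp [PiLp.add_apply, PiLp.smul_apply]
      have hlt : w i 0 < w (i+1) 0 := h _ _ (by omega) (by omega)
      have heq : u * w i 0 + s * w (i+1) 0 = w (i+1) 0 := by rw [← hc]; exact hpe
      have hu0 : u = 0 := by
        rcases eq_or_lt_of_le hu with h0 | h0
        · exact h0.symm
        · exfalso
          have hs' : s = 1 - u := by linarith
          rw [hs'] at heq
          nlinarith [mul_lt_mul_of_pos_left hlt h0]
      have hs1 : s = 1 := by linarith
      rw [hu0, hs1, zero_smul, one_smul, zero_add]

/-- An open polygonal chain in the plane that is monotone
with respect to the x-axis (strictly increasing x-coordinates of its vertices;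
such a chain is automatically simple) can be straightened within the plane. -/
theorem straighten_monotone_chain (n : ℕ) (v : ℕ → E2)
    (hmono : ∀ i j : ℕ, i < j → j < n → v i 0 < v j 0) :
    CanStraighten n v := by
  classical
  set X : ℝ → ℕ → ℝ := fun t i => v 0 0 + ∑ k ∈ Finset.range i,
      Real.sqrt ((v (k+1) 0 - v k 0)^2 + t*(2-t)*(v (k+1) 1 - v k 1)^2) with hXdef
  set f : ℝ → ℕ → E2 :=
      fun t i => X t i • e0 + (v 0 1 + (1-t)*(v i 1 - v 0 1)) • e1 with hfdef
  -- positivity of the scaled squared-slack factor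
  have hs_nonneg : ∀ t : ℝ, t ∈ Set.Icc (0:ℝ) 1 → 0 ≤ t*(2-t) := by
    intro t ht
    have := ht.1; have := ht.2
    nlinarith
  have harg_nonneg : ∀ t ∈ Set.Icc (0:ℝ) 1, ∀ k : ℕ,
      0 ≤ (v (k+1) 0 - v k 0)^2 + t*(2-t)*(v (k+1) 1 - v k 1)^2 := by
    intro t ht k
    have := hs_nonneg t ht
    positivity
  have hterm_pos : ∀ t ∈ Set.Icc (0:ℝ) 1, ∀ k : ℕ, k + 1 < n →
      0 < Real.sqrt ((v (k+1) 0 - v k 0)^2 + t*(2-t)*(v (k+1) 1 - v k 1)^2) := by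
    intro t ht k hk
    apply Real.sqrt_pos.mpr
    have hdx : 0 < v (k+1) 0 - v k 0 := by
      have := hmono k (k+1) (by omega) hk
      linarith
    have := hs_nonneg t ht
    nlinarith
  have hXsucc : ∀ t : ℝ, ∀ i : ℕ, X t (i+1) = X t i +
      Real.sqrt ((v (i+1) 0 - v i 0)^2 + t*(2-t)*(v (i+1) 1 - v i 1)^2) := by
    intro t i
    simp only [hXdef, Finset.sum_range_succ]
    ring
  have hf0 : ∀ (t : ℝ) (i : ℕ), f t i 0 = X t i := fun t i => mk_apply0 _ _
  have hf1 : ∀ (t : ℝ) (i : ℕ), f t i 1 = v 0 1 + (1-t)*(v i 1 - v 0 1) :=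
    fun t i => mk_apply1 _ _
  refine ⟨f, ⟨?_, ?_, ?_, ?_⟩, ?_⟩
  · -- continuity
    intro i hi
    apply Continuous.continuousOn
    have hX : Continuous fun t => X t i := by
      apply continuous_const.add
      apply continuous_finset_sum
      intro k _
      apply Continuous.sqrt
      continuity
    exact (hX.smul continuous_const).add
      ((continuous_const.add (((continuous_const.sub continuous_id).mul
        continuous_const))).smul continuous_const)
  · -- initial configuration
    intro i hi
    have hXi : X 0 i = v i 0 := by
      have hterms : ∀ k ∈ Finset.range i,
          Real.sqrt ((v (k+1) 0 - v k 0)^2 + (0:ℝ)*(2-0)*(v (k+1) 1 - v k 1)^2)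
            = v (k+1) 0 - v k 0 := by
        intro k hk
        rw [Finset.mem_range] at hk
        have hdx : 0 ≤ v (k+1) 0 - v k 0 := by
          have := hmono k (k+1) (by omega) (by omega)
          linarith
        rw [show (0:ℝ)*(2-0)*(v (k+1) 1 - v k 1)^2 = 0 by ring, add_zero,
          Real.sqrt_sq hdx]
      simp only [hXdef]
      rw [Finset.sum_congr rfl hterms, Finset.sum_range_sub (fun k => v k 0)]
      ring
    simp only [hfdef]
    rw [hXi, show v 0 1 + (1-(0:ℝ))*(v i 1 - v 0 1) = v i 1 by ring]
    exact (decomp (v i)).symm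
  · -- edge lengths
    intro t ht i hi
    set dx := v (i+1) 0 - v i 0 with hdx
    set dy := v (i+1) 1 - v i 1 with hdy
    set A := Real.sqrt (dx^2 + t*(2-t)*dy^2) with hAdef
    have hA2 : A^2 = dx^2 + t*(2-t)*dy^2 := Real.sq_sqrt (harg_nonneg t ht i)
    have c0 : f t (i+1) 0 - f t i 0 = A := by rw [hf0, hf0, hXsucc]; ring
    have c1 : f t (i+1) 1 - f t i 1 = (1-t)*dy := by rw [hf1, hf1]; ring
    rw [EuclideanSpace.dist_eq, EuclideanSpace.dist_eq, Fin.sum_univ_two, Fin.sum_univ_two,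
      Real.dist_eq, Real.dist_eq, Real.dist_eq, Real.dist_eq, sq_abs, sq_abs, sq_abs, sq_abs]
    have hkey : (f t (i+1) 0 - f t i 0)^2 + (f t (i+1) 1 - f t i 1)^2 = dx^2 + dy^2 := by
      rw [c0, c1]; linear_combination hA2
    rw [hkey]
  · -- simplicity
    intro t ht
    apply simple_of_monoX
    intro i j hij hj
    rw [hf0, hf0]
    clear hf0 hf1
    induction j, hij using Nat.le_induction with
    | base =>
      rw [hXsucc]
      have := hterm_pos t ht i hj
      linarith
    | succ b hb ih =>
      have h1 : X t i < X t b := ih (by omega)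
      rw [hXsucc]
      have := hterm_pos t ht b (by omega)
      linarith
  · -- final collinearity
    rw [collinear_iff_exists_forall_eq_smul_vadd]
    refine ⟨(v 0 1) • e1, e0, ?_⟩
    rintro p ⟨i, hi, rfl⟩
    refine ⟨X 1 i, ?_⟩
    simp only [hfdef, vadd_eq_add]
    rw [show v 0 1 + (1-(1:ℝ))*(v i 1 - v 0 1) = v 0 1 by ring]
end
end

section
/- Let v = (v_0,…,v_{n−1}) and w = (w_0,…,w_{n−1}) be two simple configurations of the same open polygonal chain in ℝ³, i.e. ‖v_{i+1} − v_i‖ = ‖w_{i+1} − w_i‖ for all 0 ≤ i ≤ n−2. If both configurations can be straightened, then there is a motion from v to w: a continuous family of simple configurations on [0,1], preserving all edge lengths, starting at v and ending at w. -/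
/-!
Straightening motions can be reversed and concatenated, so it suffices to join the two
straightened configurations by a motion. A simple chain lying on a line is monotone along it,
so a straightened configuration is its first vertex plus the arc-length positions times a unit
direction; since the edge lengths agree, both straightened configurations have the same
arc-length positions. Translating the first vertex while moving the direction along a path in
the unit sphere of `ℝ³` (which is path-connected) keeps the chain straight, hence simple, with
unchanged edge lengths.
-/

open scoped EuclideanGeometry RealInnerProductSpace

noncomputable section

def arcLength {X : Type*} [PseudoMetricSpace X] (u : ℕ → X) (i : ℕ) : ℝ :=
  ∑ k ∈ Finset.range i, dist (u (k+1)) (u k)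

theorem arcLength_congr {X Y : Type*} [PseudoMetricSpace X] [PseudoMetricSpace Y] {n : ℕ}
    {u : ℕ → X} {u' : ℕ → Y}
    (h : ∀ k, k + 1 < n → dist (u (k+1)) (u k) = dist (u' (k+1)) (u' k)) {i : ℕ} (hi : i < n) :
    arcLength u i = arcLength u' i :=
  Finset.sum_congr rfl fun k hk => h k (by rw [Finset.mem_range] at hk; omega)

section

variable {E : Type*} [NormedAddCommGroup E] [NormedSpace ℝ E] {n : ℕ}

theorem dist_add_smul_add_smul (q d : E) (a b : ℝ) :
    dist (q + a • d) (q + b • d) = |a - b| * ‖d‖ := by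
  rw [dist_add_left, dist_eq_norm, ← sub_smul, norm_smul, Real.norm_eq_abs]

theorem Collinear.exists_unit_direction [Nontrivial E] {s : Set E} (hs : Collinear ℝ s)
    {p₀ : E} (hp₀ : p₀ ∈ s) : ∃ d : E, ‖d‖ = 1 ∧ ∀ p ∈ s, ∃ r : ℝ, p = p₀ + r • d := by
  obtain ⟨v, hv⟩ := (collinear_iff_of_mem hp₀).1 hs
  by_cases hv0 : v = 0
  · obtain ⟨d, hd⟩ := exists_norm_eq E zero_le_one
    refine ⟨d, hd, fun p hp => ⟨0, ?_⟩⟩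
    obtain ⟨r, rfl⟩ := hv p hp
    simp [hv0]
  · refine ⟨‖v‖⁻¹ • v, norm_smul_inv_norm hv0, fun p hp => ?_⟩
    obtain ⟨r, rfl⟩ := hv p hp
    refine ⟨r * ‖v‖, ?_⟩
    rw [smul_smul, mul_assoc, mul_inv_cancel₀ (norm_ne_zero_iff.2 hv0), mul_one, vadd_eq_add,
      add_comm]

namespace IsSimpleOpenChain

theorem congr_s19 {u u' : ℕ → E} (h : ∀ i < n, u i = u' i) (hu : IsSimpleOpenChain n u) :
    IsSimpleOpenChain n u' := by
  obtain ⟨hdisj, hadj⟩ := hu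
  refine ⟨fun i j hi hj hij => ?_, fun i hi => ?_⟩
  · rw [← h i (by omega), ← h (i+1) hi, ← h j (by omega), ← h (j+1) hj]
    exact hdisj i j hi hj hij
  · rw [← h i (by omega), ← h (i+1) (by omega), ← h (i+2) hi]
    exact hadj i hi

theorem comp_affineMap_iff {F : Type*} [NormedAddCommGroup F] [NormedSpace ℝ F]
    {A : E →ᵃ[ℝ] F} (hA : Function.Injective A) {u : ℕ → E} :
    IsSimpleOpenChain n (fun i => A (u i)) ↔ IsSimpleOpenChain n u := by
  simp only [IsSimpleOpenChain, ← image_segment, Set.disjoint_image_iff hA,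
    ← Set.image_inter hA, ← Set.image_singleton, (Set.image_injective.2 hA).eq_iff]

theorem iff_of_eq_add_smul {u : ℕ → E} {s : ℕ → ℝ} {q d : E} (hd : d ≠ 0)
    (h : ∀ i < n, u i = q + s i • d) : IsSimpleOpenChain n u ↔ IsSimpleOpenChain n s := by
  have hline : ∀ r : ℝ, AffineMap.lineMap q (q + d) r = q + r • d := fun r => by
    rw [AffineMap.lineMap_apply, vadd_eq_add, vsub_eq_sub, add_sub_cancel_left, add_comm]
  have hinj := AffineMap.lineMap_injective ℝ (by simpa using hd : q ≠ q + d)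
  rw [← comp_affineMap_iff hinj]
  exact ⟨congr_s19 fun i hi => (h i hi).trans (hline _).symm,
    congr_s19 fun i hi => (hline _).trans (h i hi).symm⟩

theorem ne_succ {u : ℕ → E} (hu : IsSimpleOpenChain n u) {i : ℕ} (hi₁ : 1 ≤ i)
    (hi₂ : i + 2 < n) : u i ≠ u (i + 1) := by
  intro h
  have hprev : u i ∈ segment ℝ (u (i - 1)) (u (i - 1 + 1)) := by
    rw [Nat.sub_add_cancel hi₁]
    exact right_mem_segment ℝ _ _
  have hnext : u i ∈ segment ℝ (u (i + 1)) (u (i + 1 + 1)) := by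
    rw [h]
    exact left_mem_segment ℝ _ _
  exact Set.disjoint_left.1 (hu.1 (i - 1) (i + 1) (by omega) hi₂ (by omega)) hprev hnext

end IsSimpleOpenChain

end

theorem mem_uIcc_of_abs_le_of_mul_neg {x y z : ℝ} (hturn : (y - x) * (z - y) < 0)
    (hle : |x - y| ≤ |z - y|) : x ∈ Set.uIcc y z := by
  rw [Set.mem_uIcc]
  rcases mul_neg_iff.1 hturn with h | h <;> cases abs_cases (x - y) <;>
    cases abs_cases (z - y) <;> first
      | exact Or.inl ⟨by linarith, by linarith⟩
      | exact Or.inr ⟨by linarith, by linarith⟩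

namespace IsSimpleOpenChain

variable {n : ℕ} {b : ℕ → ℝ}

/-- If the chain turned back at `b (i+1)`, the nearer of `b i`, `b (i+2)` would lie on both
adjacent edges. -/
theorem sub_mul_sub_nonneg (hb : IsSimpleOpenChain n b) {i : ℕ} (hi : i + 2 < n) :
    0 ≤ (b (i+1) - b i) * (b (i+2) - b (i+1)) := by
  by_contra! hturn
  have hadj := hb.2 i hi
  simp only [segment_eq_uIcc] at hadj
  obtain ⟨p, hp, hp_ne⟩ :
      ∃ p ∈ Set.uIcc (b i) (b (i+1)) ∩ Set.uIcc (b (i+1)) (b (i+2)), p ≠ b (i+1) := by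
    rcases le_total |b i - b (i+1)| |b (i+2) - b (i+1)| with hle | hle
    · exact ⟨b i, ⟨Set.left_mem_uIcc, mem_uIcc_of_abs_le_of_mul_neg hturn hle⟩,
        (sub_ne_zero.1 (left_ne_zero_of_mul hturn.ne)).symm⟩
    · refine ⟨b (i+2), ⟨?_, Set.right_mem_uIcc⟩, sub_ne_zero.1 (right_ne_zero_of_mul hturn.ne)⟩
      rw [Set.uIcc_comm]
      exact mem_uIcc_of_abs_le_of_mul_neg (by linarith) hle
  rw [hadj] at hp
  exact hp_ne hp

theorem sub_mul_sub_nonneg_of_lt (hb : IsSimpleOpenChain n b) {i j : ℕ} (hij : i < j)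
    (hj : j + 1 < n) : 0 ≤ (b (i+1) - b i) * (b (j+1) - b j) := by
  induction j, hij using Nat.le_induction with
  | base => exact hb.sub_mul_sub_nonneg hj
  | succ j hij ih =>
    have hdj : b (j+1) - b j ≠ 0 := sub_ne_zero.2 (hb.ne_succ (by omega) hj).symm
    have hprod : 0 ≤ (b (j+1) - b j) ^ 2 * ((b (i+1) - b i) * (b (j+1+1) - b (j+1))) := by
      have := mul_nonneg (ih (by omega)) (hb.sub_mul_sub_nonneg hj)
      linarith
    exact (mul_nonneg_iff_of_pos_left (sq_pos_of_ne_zero hdj)).1 hprod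

theorem monotone_or_antitone (hb : IsSimpleOpenChain n b) :
    (∀ i, i + 1 < n → b i ≤ b (i+1)) ∨ (∀ i, i + 1 < n → b (i+1) ≤ b i) := by
  by_contra! h
  obtain ⟨⟨i, hi, hi_down⟩, j, hj, hj_up⟩ := h
  rcases lt_trichotomy i j with hij | rfl | hij
  · nlinarith [hb.sub_mul_sub_nonneg_of_lt hij hj]
  · linarith
  · nlinarith [hb.sub_mul_sub_nonneg_of_lt hij hi]

theorem exists_eq_add_mul_arcLength (hb : IsSimpleOpenChain n b) :
    ∃ σ : ℝ, |σ| = 1 ∧ ∀ i < n, b i = b 0 + σ * arcLength b i := by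
  rcases hb.monotone_or_antitone with hmono | hanti
  · refine ⟨1, abs_one, fun i hi => ?_⟩
    have : arcLength b i = b i - b 0 := by
      rw [arcLength, ← Finset.sum_range_sub]
      refine Finset.sum_congr rfl fun k hk => ?_
      rw [Finset.mem_range] at hk
      rw [Real.dist_eq, abs_of_nonneg (sub_nonneg.2 (hmono k (by omega)))]
    linarith
  · refine ⟨-1, by norm_num, fun i hi => ?_⟩
    have : arcLength b i = b 0 - b i := by
      rw [arcLength, ← Finset.sum_range_sub']
      refine Finset.sum_congr rfl fun k hk => ?_
      rw [Finset.mem_range] at hk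
      rw [Real.dist_eq, abs_sub_comm, abs_of_nonneg (sub_nonneg.2 (hanti k (by omega)))]
    linarith

end IsSimpleOpenChain

section

variable {E : Type*} [NormedAddCommGroup E] [NormedSpace ℝ E] {n : ℕ}

theorem IsSimpleOpenChain.exists_eq_add_arcLength_smul [Nontrivial E] {u : ℕ → E}
    (hu : IsSimpleOpenChain n u) (hc : Collinear ℝ (u '' {i | i < n})) :
    ∃ d : E, ‖d‖ = 1 ∧ ∀ i < n, u i = u 0 + arcLength u i • d := by
  rcases n.eq_zero_or_pos with rfl | hn
  · obtain ⟨d, hd⟩ := exists_norm_eq E zero_le_one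
    exact ⟨d, hd, fun i hi => absurd hi (Nat.not_lt_zero i)⟩
  obtain ⟨d, hd, hline⟩ := hc.exists_unit_direction ⟨0, hn, rfl⟩
  choose! b hb using fun i (hi : i < n) => hline (u i) ⟨i, hi, rfl⟩
  have hd0 : d ≠ 0 := ne_zero_of_norm_ne_zero (by simp [hd])
  have hb0 : b 0 = 0 := (smul_eq_zero.1 (left_eq_add.1 (hb 0 hn))).resolve_right hd0
  have harc : ∀ i < n, arcLength u i = arcLength b i := fun i => arcLength_congr fun k hk => by
    rw [hb (k+1) hk, hb k (by omega), dist_add_smul_add_smul, hd, mul_one, Real.dist_eq]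
  obtain ⟨σ, hσ, hσb⟩ := ((iff_of_eq_add_smul hd0 hb).1 hu).exists_eq_add_mul_arcLength
  refine ⟨σ • d, by rw [norm_smul, Real.norm_eq_abs, hσ, hd, one_mul], fun i hi => ?_⟩
  rw [hb i hi, hσb i hi, hb0, zero_add, harc i hi, smul_smul, mul_comm]

def JoinedByMotion (n : ℕ) (v w : ℕ → E) : Prop :=
  ∃ f : ℝ → ℕ → E, IsChainMotion n v f ∧ ∀ i < n, f 1 i = w i

theorem IsChainMotion.joinedByMotion {v : ℕ → E} {f : ℝ → ℕ → E} (hf : IsChainMotion n v f) :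
    JoinedByMotion n v (f 1) :=
  ⟨f, hf, fun _ _ => rfl⟩

namespace JoinedByMotion

variable {u v w : ℕ → E}

theorem symm (h : JoinedByMotion n v w) : JoinedByMotion n w v := by
  obtain ⟨f, ⟨hfc, hf0, hfl, hfs⟩, hf1⟩ := h
  have hrev : Set.MapsTo (fun t : ℝ => 1 - t) (Set.Icc 0 1) (Set.Icc 0 1) :=
    fun t ht => ⟨by linarith [ht.2], by linarith [ht.1]⟩
  refine ⟨fun t => f (1 - t), ⟨fun i hi => ?_, fun i hi => ?_, fun t ht i hi => ?_,
    fun t ht => hfs _ (hrev ht)⟩, fun i hi => ?_⟩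
  · exact (hfc i hi).comp (continuous_const.sub continuous_id).continuousOn hrev
  · simpa using hf1 i hi
  · rw [hfl _ (hrev ht) i hi, ← hf1 (i+1) hi, ← hf1 i (by omega),
      hfl 1 (Set.right_mem_Icc.2 zero_le_one) i hi]
  · simpa using hf0 i hi

theorem trans (huv : JoinedByMotion n u v) (hvw : JoinedByMotion n v w) :
    JoinedByMotion n u w := by
  obtain ⟨f, ⟨hfc, hf0, hfl, hfs⟩, hf1⟩ := huv
  obtain ⟨g, ⟨hgc, hg0, hgl, hgs⟩, hg1⟩ := hvw
  -- clamping to `[0, 1]` makes both halves continuous on all of `ℝ`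
  let c : ℝ → ℝ := fun t => Set.projIcc 0 1 zero_le_one t
  have hc : Continuous c := continuous_subtype_val.comp continuous_projIcc
  have hc_mem : ∀ t, c t ∈ Set.Icc 0 1 := fun t => (Set.projIcc 0 1 zero_le_one t).2
  have hc_zero : c 0 = 0 := by simp [c]
  have hc_one : c 1 = 1 := by simp [c]
  refine ⟨fun t i => if t ≤ 1/2 then f (c (2*t)) i else g (c (2*t - 1)) i,
    ⟨fun i hi => ?_, fun i hi => ?_, fun t _ i hi => ?_, fun t _ => ?_⟩, fun i hi => ?_⟩
  · refine Continuous.continuousOn (Continuous.if_le ?_ ?_ continuous_id continuous_const ?_)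
    · exact (hfc i hi).comp_continuous (hc.comp (by fun_prop)) fun t => hc_mem _
    · exact (hgc i hi).comp_continuous (hc.comp (by fun_prop)) fun t => hc_mem _
    · rintro t rfl
      norm_num [hc_zero, hc_one, hf1 i hi, hg0 i hi]
  · norm_num [hc_zero, hf0 i hi]
  · dsimp only
    split_ifs
    · exact hfl _ (hc_mem _) i hi
    · rw [hgl _ (hc_mem _) i hi, ← hf1 (i+1) hi, ← hf1 i (by omega),
        hfl 1 (Set.right_mem_Icc.2 zero_le_one) i hi]
  · by_cases ht : t ≤ 1/2
    · simpa only [ht, if_true] using hfs _ (hc_mem (2*t))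
    · simpa only [ht, if_false] using hgs _ (hc_mem (2*t - 1))
  · norm_num [hc_one, hg1 i hi]

end JoinedByMotion

theorem joinedByMotion_of_eq_add_smul (hE : 1 < Module.rank ℝ E) {u₁ u₂ : ℕ → E} {s : ℕ → ℝ}
    {q₁ q₂ d₁ d₂ : E} (hu₁ : IsSimpleOpenChain n u₁) (hd₁ : ‖d₁‖ = 1) (hd₂ : ‖d₂‖ = 1)
    (h₁ : ∀ i < n, u₁ i = q₁ + s i • d₁) (h₂ : ∀ i < n, u₂ i = q₂ + s i • d₂) :
    JoinedByMotion n u₁ u₂ := by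
  have hs : IsSimpleOpenChain n s :=
    (IsSimpleOpenChain.iff_of_eq_add_smul (ne_zero_of_norm_ne_zero (by simp [hd₁])) h₁).1 hu₁
  obtain ⟨γ, hγ⟩ := (isPathConnected_sphere hE 0 zero_le_one).joinedIn d₁ (by simpa using hd₁)
    d₂ (by simpa using hd₂)
  have hγ_norm : ∀ t, ‖γ.extend t‖ = 1 := fun t => by
    simpa [Path.extend, Set.IccExtend] using hγ (Set.projIcc 0 1 zero_le_one t)
  refine ⟨fun t i => (q₁ + t • (q₂ - q₁)) + s i • γ.extend t,
    ⟨fun i _ => ?_, fun i hi => ?_, fun t _ i hi => ?_, fun t _ => ?_⟩, fun i hi => ?_⟩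
  · exact Continuous.continuousOn (by fun_prop)
  · simp [h₁ i hi]
  · rw [h₁ (i+1) hi, h₁ i (by omega), dist_add_smul_add_smul, dist_add_smul_add_smul,
      hγ_norm, hd₁]
  · have hγ_ne : γ.extend t ≠ 0 := ne_zero_of_norm_ne_zero (by simp [hγ_norm t])
    exact (IsSimpleOpenChain.iff_of_eq_add_smul hγ_ne fun i _ => rfl).2 hs
  · simp [h₂ i hi]

end

theorem motion_between_unlocked_configurations_general (n : ℕ) (v w : ℕ → E3)
    (hlen : ∀ i : ℕ, i + 1 < n → dist (v (i+1)) (v i) = dist (w (i+1)) (w i))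
    (hvs : CanStraighten n v) (hws : CanStraighten n w) :
    ∃ f : ℝ → ℕ → E3, IsChainMotion n v f ∧ ∀ i < n, f 1 i = w i := by
  obtain ⟨f, hf, hf_line⟩ := hvs
  obtain ⟨g, hg, hg_line⟩ := hws
  have h1 : (1 : ℝ) ∈ Set.Icc 0 1 := Set.right_mem_Icc.2 zero_le_one
  have hf_simple : IsSimpleOpenChain n (f 1) := hf.2.2.2 1 h1
  obtain ⟨d₁, hd₁, hf₁⟩ := hf_simple.exists_eq_add_arcLength_smul hf_line
  obtain ⟨d₂, hd₂, hg₁⟩ := (hg.2.2.2 1 h1).exists_eq_add_arcLength_smul hg_line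
  have harc_f : ∀ i < n, arcLength (f 1) i = arcLength v i :=
    fun i => arcLength_congr (hf.2.2.1 1 h1)
  have harc_g : ∀ i < n, arcLength (g 1) i = arcLength v i :=
    fun i => arcLength_congr fun k hk => (hg.2.2.1 1 h1 k hk).trans (hlen k hk).symm
  have hrank : 1 < Module.rank ℝ E3 := by
    rw [← Module.finrank_eq_rank, finrank_euclideanSpace_fin]
    norm_num
  have hstraight : JoinedByMotion n (f 1) (g 1) :=
    joinedByMotion_of_eq_add_smul hrank hf_simple hd₁ hd₂
      (fun i hi => by rw [hf₁ i hi, harc_f i hi]) (fun i hi => by rw [hg₁ i hi, harc_g i hi])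
  exact (hf.joinedByMotion.trans hstraight).trans hg.joinedByMotion.symm

/-- If two simple configurations of the same open chain in
`ℝ³` (equal corresponding edge lengths) can both be straightened, then there is
a motion (continuous, edge-length-preserving, simplicity-preserving) taking the
first configuration to the second. -/
theorem motion_between_unlocked_configurations (n : ℕ) (v w : ℕ → E3)
    (hv : IsSimpleOpenChain n v) (hw : IsSimpleOpenChain n w)
    (hlen : ∀ i : ℕ, i + 1 < n → dist (v (i+1)) (v i) = dist (w (i+1)) (w i))
    (hvs : CanStraighten n v) (hws : CanStraighten n w) :
    ∃ f : ℝ → ℕ → E3, IsChainMotion n v f ∧ ∀ i < n, f 1 i = w i :=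
  motion_between_unlocked_configurations_general n v w hlen hvs hws
end
end
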